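/- arXiv:1312.2495 — 4 statements merged into one kernel-verified Lean document; each statement's English description precedes it below -/
import Mathlib

section
/- The comultiplication preserves the first M-relation: for all p, p', k, l ∈ ι one has Δα p k * Δα p' l = Δα p' l * Δα p k in H₁ ⊗[ℂ] H₂. -/
open scoped TensorProduct

theorem stmt_3
    {ι : Type*} [DecidableEq ι] (q : ℂ) (hq : q ≠ 0)
    (g : ι → ι → ℂ) (hg : ∀ p p' : ι, g p p' = if p = p' then q else 1)
    {H₁ : Type*} [Ring H₁] [Algebra ℂ H₁] [StarRing H₁]
    (α₁ β₁ : ι → ι → H₁) (f₁ : ι → H₁)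
    (hAfin1 : ∀ p, (Function.support (α₁ p)).Finite)
    (hAfin2 : ∀ p, (Function.support (β₁ p)).Finite)
    (hA1 : ∀ p p' k l : ι, α₁ p k * α₁ p' l = α₁ p' l * α₁ p k)
    (hA2 : ∀ p p' k l : ι, α₁ p k * star (α₁ p' l) = (g p p' * (g k l)⁻¹) • (star (α₁ p' l) * α₁ p k))
    (hA3 : ∀ p p' k l : ι, α₁ p k * β₁ p' l = (g k l)⁻¹ • (β₁ p' l * α₁ p k))
    (hA4 : ∀ p p' k l : ι, α₁ p k * star (β₁ p' l) = g p p' • (star (β₁ p' l) * α₁ p k))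
    (hA5 : ∀ p p' k : ι, α₁ p k * f₁ p' = f₁ p' * α₁ p k)
    (hA6 : ∀ p p' k : ι, α₁ p k * star (f₁ p') = g p p' • (star (f₁ p') * α₁ p k))
    (hA7 : ∀ p p' k l : ι, β₁ p k * β₁ p' l = β₁ p' l * β₁ p k)
    (hA8 : ∀ p p' k l : ι, β₁ p k * star (β₁ p' l) = (g p p' * g k l) • (star (β₁ p' l) * β₁ p k))
    (hA9 : ∀ p p' k : ι, β₁ p k * f₁ p' = f₁ p' * β₁ p k)
    (hA10 : ∀ p p' k : ι, β₁ p k * star (f₁ p') = g p p' • (star (f₁ p') * β₁ p k))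
    (hA11 : ∀ p p' : ι, f₁ p * f₁ p' - f₁ p' * f₁ p = ∑ᶠ k, (α₁ p k * β₁ p' k - α₁ p' k * β₁ p k))
    (hA12 : ∀ p p' : ι, f₁ p * star (f₁ p') - g p p' • (star (f₁ p') * f₁ p)
        = (if p = p' then (1 : ℂ) else 0) • (1 : H₁) - (∑ᶠ k, α₁ p k * star (α₁ p' k))
          + g p p' • ∑ᶠ k, star (β₁ p' k) * β₁ p k)
    {H₂ : Type*} [Ring H₂] [Algebra ℂ H₂] [StarRing H₂]
    (α₂ β₂ : ι → ι → H₂) (f₂ : ι → H₂)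
    (hBfin1 : ∀ p, (Function.support (α₂ p)).Finite)
    (hBfin2 : ∀ p, (Function.support (β₂ p)).Finite)
    (hB1 : ∀ p p' k l : ι, α₂ p k * α₂ p' l = α₂ p' l * α₂ p k)
    (hB2 : ∀ p p' k l : ι, α₂ p k * star (α₂ p' l) = (g p p' * (g k l)⁻¹) • (star (α₂ p' l) * α₂ p k))
    (hB3 : ∀ p p' k l : ι, α₂ p k * β₂ p' l = (g k l)⁻¹ • (β₂ p' l * α₂ p k))
    (hB4 : ∀ p p' k l : ι, α₂ p k * star (β₂ p' l) = g p p' • (star (β₂ p' l) * α₂ p k))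
    (hB5 : ∀ p p' k : ι, α₂ p k * f₂ p' = f₂ p' * α₂ p k)
    (hB6 : ∀ p p' k : ι, α₂ p k * star (f₂ p') = g p p' • (star (f₂ p') * α₂ p k))
    (hB7 : ∀ p p' k l : ι, β₂ p k * β₂ p' l = β₂ p' l * β₂ p k)
    (hB8 : ∀ p p' k l : ι, β₂ p k * star (β₂ p' l) = (g p p' * g k l) • (star (β₂ p' l) * β₂ p k))
    (hB9 : ∀ p p' k : ι, β₂ p k * f₂ p' = f₂ p' * β₂ p k)
    (hB10 : ∀ p p' k : ι, β₂ p k * star (f₂ p') = g p p' • (star (f₂ p') * β₂ p k))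
    (hB11 : ∀ p p' : ι, f₂ p * f₂ p' - f₂ p' * f₂ p = ∑ᶠ k, (α₂ p k * β₂ p' k - α₂ p' k * β₂ p k))
    (hB12 : ∀ p p' : ι, f₂ p * star (f₂ p') - g p p' • (star (f₂ p') * f₂ p)
        = (if p = p' then (1 : ℂ) else 0) • (1 : H₂) - (∑ᶠ k, α₂ p k * star (α₂ p' k))
          + g p p' • ∑ᶠ k, star (β₂ p' k) * β₂ p k)
    (Dα Dβ Dαs Dβs : ι → ι → H₁ ⊗[ℂ] H₂) (Df Dfs : ι → H₁ ⊗[ℂ] H₂)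
    (hDα : ∀ p k : ι, Dα p k = (∑ᶠ η, α₁ p η ⊗ₜ[ℂ] α₂ η k) + ∑ᶠ η, β₁ p η ⊗ₜ[ℂ] star (β₂ η k))
    (hDβ : ∀ p k : ι, Dβ p k = (∑ᶠ η, α₁ p η ⊗ₜ[ℂ] β₂ η k) + ∑ᶠ η, β₁ p η ⊗ₜ[ℂ] star (α₂ η k))
    (hDf : ∀ p : ι, Df p = (∑ᶠ η, α₁ p η ⊗ₜ[ℂ] f₂ η) + (∑ᶠ η, β₁ p η ⊗ₜ[ℂ] star (f₂ η)) + f₁ p ⊗ₜ[ℂ] 1)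
    (hDαs : ∀ p k : ι, Dαs p k = (∑ᶠ η, star (α₁ p η) ⊗ₜ[ℂ] star (α₂ η k)) + ∑ᶠ η, star (β₁ p η) ⊗ₜ[ℂ] β₂ η k)
    (hDβs : ∀ p k : ι, Dβs p k = (∑ᶠ η, star (α₁ p η) ⊗ₜ[ℂ] star (β₂ η k)) + ∑ᶠ η, star (β₁ p η) ⊗ₜ[ℂ] α₂ η k)
    (hDfs : ∀ p : ι, Dfs p
        = (∑ᶠ η, star (α₁ p η) ⊗ₜ[ℂ] star (f₂ η)) + (∑ᶠ η, star (β₁ p η) ⊗ₜ[ℂ] f₂ η) + star (f₁ p) ⊗ₜ[ℂ] 1) :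
    ∀ p p' k l : ι, Dα p k * Dα p' l = Dα p' l * Dα p k := by

  intro p p' k l
  have hgne : ∀ a b : ι, g a b ≠ 0 := by
    intro a b; rw [hg]; split <;> simp [hq]
  classical
  set s : Finset ι :=
    (((hAfin1 p).union (hAfin2 p)).union ((hAfin1 p').union (hAfin2 p'))).toFinset with hs
  have hsupα : ∀ r : ι, Function.support (α₁ r) ⊆ Function.support (α₁ r) := fun _ => subset_rfl
  have key : ∀ (c : ι → H₁) (d : ι → H₂), Function.support c ⊆ (s : Set ι) →
      ∑ᶠ η, c η ⊗ₜ[ℂ] d η = ∑ η ∈ s, c η ⊗ₜ[ℂ] d η := by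
    intro c d hc
    apply finsum_eq_finset_sum_of_support_subset
    intro η hη
    apply hc
    intro h0
    apply hη
    simp only [Function.mem_support, not_not] at h0 ⊢
    rw [h0, TensorProduct.zero_tmul]
  have hcs : ∀ r : ι, r = p ∨ r = p' → Function.support (α₁ r) ⊆ (s : Set ι) ∧
      Function.support (β₁ r) ⊆ (s : Set ι) := by
    rintro r (rfl | rfl) <;> constructor <;> intro x hx <;>
      simp only [hs, Set.Finite.coe_toFinset, Set.mem_union] <;> tauto
  have eDα : ∀ r m : ι, r = p ∨ r = p' →
      Dα r m = ∑ η ∈ s, (α₁ r η ⊗ₜ[ℂ] α₂ η m + β₁ r η ⊗ₜ[ℂ] star (β₂ η m)) := by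
    intro r m hr
    rw [hDα, key _ _ (hcs r hr).1, key _ _ (hcs r hr).2, ← Finset.sum_add_distrib]
  rw [eDα p k (Or.inl rfl), eDα p' l (Or.inr rfl), Finset.sum_mul_sum, Finset.sum_mul_sum,
    Finset.sum_comm]
  refine Finset.sum_congr rfl fun η _ => Finset.sum_congr rfl fun η' _ => ?_
  simp only [add_mul, mul_add, Algebra.TensorProduct.tmul_mul_tmul]
  have hT1 : (α₁ p η' * α₁ p' η) ⊗ₜ[ℂ] (α₂ η' k * α₂ η l)
      = (α₁ p' η * α₁ p η') ⊗ₜ[ℂ] (α₂ η l * α₂ η' k) := by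
    rw [hA1, hB1]
  have hT2 : (α₁ p η' * β₁ p' η) ⊗ₜ[ℂ] (α₂ η' k * star (β₂ η l))
      = (β₁ p' η * α₁ p η') ⊗ₜ[ℂ] (star (β₂ η l) * α₂ η' k) := by
    rw [hA3 p p' η' η, hB4 η' η k l, ← TensorProduct.smul_tmul', TensorProduct.tmul_smul,
      smul_smul, inv_mul_cancel₀ (hgne η' η), one_smul]
  have hT3 : (β₁ p η' * α₁ p' η) ⊗ₜ[ℂ] (star (β₂ η' k) * α₂ η l)
      = (α₁ p' η * β₁ p η') ⊗ₜ[ℂ] (α₂ η l * star (β₂ η' k)) := by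
    rw [hA3 p' p η η', hB4 η η' l k, ← TensorProduct.smul_tmul', TensorProduct.tmul_smul,
      smul_smul, inv_mul_cancel₀ (hgne η η'), one_smul]
  have hT4 : (β₁ p η' * β₁ p' η) ⊗ₜ[ℂ] (star (β₂ η' k) * star (β₂ η l))
      = (β₁ p' η * β₁ p η') ⊗ₜ[ℂ] (star (β₂ η l) * star (β₂ η' k)) := by
    rw [hA7, ← star_mul, hB7, star_mul]
  rw [hT1, hT2, hT3, hT4]
  abel
end

section
/- The comultiplication preserves the α–α† exchange relation: for all p, p', k, l ∈ ι one has Δα p k * Δα⋆ p' l = (g p p' * (g k l)⁻¹) • (Δα⋆ p' l * Δα p k) in H₁ ⊗[ℂ] H₂. -/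
/-!
Expanding both coproducts, `Δα p k * Δα⋆ p' l` becomes four double sums of products of
elementary tensors, and it suffices that each such product commutes up to `g p p' * (g k l)⁻¹`.
Three of the four kinds of products factor into two M-relations. The fourth,
`(β₁ ⊗ β₂⋆) * (α₁⋆ ⊗ α₂⋆)`, needs commutation rules for `β α⋆` and `β⋆ α⋆`; starring the
M-relations for `α β⋆` and `α β` gives them only up to the central element
`star (algebraMap ℂ H c)`, which need not be `c • 1` since `H` is not a star module.
Multiplying the diagonal `f`–`f⋆` relation and its star by `α` gives
`α = α α⋆ α - q β⋆ β α = α α⋆ α - β⋆ β α star (algebraMap ℂ H q)`, so `star (algebraMap ℂ H q)`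
acts as `q` where it matters, and the central elements can be traded for scalars. The scalars so
obtained differ from `g p p' * (g k l)⁻¹` only when one of the two tensor factors vanishes.
-/

open scoped TensorProduct
open Function

section StarAlgebraMap

variable {R : Type*} [CommSemiring R]

/-- `star (c • x) = star x * starAlgebraMap A c`; without a `StarModule` instance this central
element need not be a scalar. -/
noncomputable def starAlgebraMap (A : Type*) [Semiring A] [Algebra R A] [StarRing A] (c : R) :
    A :=
  star (algebraMap R A c)

variable {A : Type*} [Semiring A] [Algebra R A] [StarRing A]

theorem commute_starAlgebraMap (c : R) (x : A) : Commute (starAlgebraMap A c) x := by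
  simpa [starAlgebraMap, Commute, SemiconjBy]
    using (congrArg star (Algebra.commutes c (star x))).symm

theorem starAlgebraMap_one : starAlgebraMap A (1 : R) = 1 := by
  simp [starAlgebraMap]

theorem starAlgebraMap_mul (a b : R) :
    starAlgebraMap A (a * b) = starAlgebraMap A a * starAlgebraMap A b := by
  rw [starAlgebraMap, map_mul, star_mul]
  exact commute_starAlgebraMap b _

theorem star_smul_eq_star_mul_starAlgebraMap (c : R) (x : A) :
    star (c • x) = star x * starAlgebraMap A c := by
  rw [Algebra.smul_def, star_mul, starAlgebraMap]

theorem star_mul_starAlgebraMap (c : R) (x : A) :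
    star (x * starAlgebraMap A c) = c • star x := by
  rw [star_mul, starAlgebraMap, star_star, Algebra.smul_def]

end StarAlgebraMap

section StarAlgebraMapField

variable {𝕜 A : Type*} [Field 𝕜] [Ring A] [Algebra 𝕜 A] [StarRing A]

theorem isUnit_starAlgebraMap {c : 𝕜} (hc : c ≠ 0) : IsUnit (starAlgebraMap A c) :=
  ⟨⟨starAlgebraMap A c, starAlgebraMap A c⁻¹,
    by rw [← starAlgebraMap_mul, mul_inv_cancel₀ hc, starAlgebraMap_one],
    by rw [← starAlgebraMap_mul, inv_mul_cancel₀ hc, starAlgebraMap_one]⟩, rfl⟩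

theorem mul_starAlgebraMap_inv {c : 𝕜} (hc : c ≠ 0) {x : A}
    (h : x * starAlgebraMap A c = c • x) : x * starAlgebraMap A c⁻¹ = c⁻¹ • x := by
  have hcc : starAlgebraMap A c * starAlgebraMap A c⁻¹ = 1 := by
    rw [← starAlgebraMap_mul, mul_inv_cancel₀ hc, starAlgebraMap_one]
  calc x * starAlgebraMap A c⁻¹ = c⁻¹ • (x * starAlgebraMap A c * starAlgebraMap A c⁻¹) := by
        rw [h, smul_mul_assoc, smul_smul, inv_mul_cancel₀ hc, one_smul]
    _ = c⁻¹ • x := by rw [mul_assoc, hcc, mul_one]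

theorem eq_one_iff_eq_one_of_mul_starAlgebraMap_eq_smul {a b : 𝕜} {x : A} (hx : x ≠ 0)
    (h : x * starAlgebraMap A a = b • x) : a = 1 ↔ b = 1 := by
  constructor
  · rintro rfl
    rw [starAlgebraMap_one, mul_one] at h
    have : (b - 1) • x = 0 := by rw [sub_smul, ← h, one_smul, sub_self]
    simpa [sub_eq_zero, hx] using this
  · rintro rfl
    have h' := congrArg star h
    rw [star_mul_starAlgebraMap, one_smul] at h'
    by_contra ha
    apply hx
    have : (a - 1) • star x = 0 := by rw [sub_smul, h', one_smul, sub_self]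
    simpa [sub_eq_zero, ha] using this

end StarAlgebraMapField

section TwistedCommute

variable {𝕜 A : Type*} [Field 𝕜] [Ring A] [Algebra 𝕜 A]

/-- Expanding `b * a` through `ha` and pushing `b` to the right gives
`b * a = c • (a * b * s * s)`; comparing with `hba` cancels one `s`. -/
theorem mul_eq_smul_mul_of_twisted_commute {a b u v s : A} {q c d e : 𝕜}
    (hs : ∀ x, Commute s x) (hsu : IsUnit s) (ha : a = a * u * a - q • (a * v))
    (hba : b * a = a * b * s) (hbu : b * u = c • (u * b)) (hbv : b * v = d • (v * b))
    (hav : a * v * b * s = e • (a * v * b)) (hcde : c * e = d) :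
    a * b = c • (b * a) := by
  have hsr (x y : A) : x * s * y = x * y * s := by rw [mul_assoc, (hs y).eq, ← mul_assoc]
  have hbaua : b * a * u * a = c • (a * u * a * b * s * s) :=
    calc b * a * u * a = a * (b * u) * a * s := by
          rw [hba, hsr, hsr]; simp only [mul_assoc]
      _ = c • (a * u * (b * a) * s) := by
          rw [hbu]; simp only [mul_smul_comm, smul_mul_assoc, mul_assoc]
      _ = c • (a * u * a * b * s * s) := by rw [hba]; simp only [mul_assoc]
  have hbav : b * a * v = d • (a * v * b * s) := by
    rw [hba, hsr, mul_assoc a b v, hbv, mul_smul_comm, smul_mul_assoc, ← mul_assoc]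
  have haua : a * u * a = a + q • (a * v) := by rw [eq_sub_iff_add_eq] at ha; rw [← ha]
  have hba' : a * b * s = c • (a * b * s) * s :=
    calc a * b * s = b * a * u * a - q • (b * a * v) := by
          rw [← hba]; conv_lhs => rw [ha]
          rw [mul_sub, mul_smul_comm]; simp only [mul_assoc]
      _ = c • (a * b * s * s) + (c * q) • (a * v * b * s * s) - (q * d) • (a * v * b * s) := by
          rw [hbaua, hbav, haua, add_mul, add_mul, add_mul, smul_mul_assoc, smul_mul_assoc,
            smul_mul_assoc, smul_add, smul_smul, smul_smul]
      _ = c • (a * b * s) * s := by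
          rw [show a * v * b * s * s = e • (a * v * b * s) from
            (congrArg (· * s) hav).trans (smul_mul_assoc _ _ _), smul_smul,
            ← hcde, smul_mul_assoc]
          module
  rw [hba]
  exact hsu.mul_right_cancel hba'

end TwistedCommute

theorem star_finsum {ι R : Type*} [AddCommMonoid R] [StarAddMonoid R] (F : ι → R) :
    star (∑ᶠ i, F i) = ∑ᶠ i, star (F i) :=
  (starAddEquiv : R ≃+ R).map_finsum F

theorem finite_support_of_imp_eq_zero {ι M N : Type*} [Zero M] [Zero N] {u : ι → M}
    (hu : (support u).Finite) {F : ι → N} (hF : ∀ i, u i = 0 → F i = 0) : (support F).Finite :=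
  hu.subset fun i hi h0 => hi (hF i h0)

structure MRelations {𝕜 ι H : Type*} [Field 𝕜] [DecidableEq ι] [Ring H] [Algebra 𝕜 H] [StarRing H]
    (q : 𝕜) (g : ι → ι → 𝕜) (α β : ι → ι → H) (f : ι → H) : Prop where
  q_ne_zero : q ≠ 0
  g_eq : ∀ p p', g p p' = if p = p' then q else 1
  finite_support_α : ∀ p, (support (α p)).Finite
  finite_support_β : ∀ p, (support (β p)).Finite
  α_mul_α : ∀ p p' k l, α p k * α p' l = α p' l * α p k
  α_mul_star_α : ∀ p p' k l,
    α p k * star (α p' l) = (g p p' * (g k l)⁻¹) • (star (α p' l) * α p k)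
  α_mul_β : ∀ p p' k l, α p k * β p' l = (g k l)⁻¹ • (β p' l * α p k)
  α_mul_star_β : ∀ p p' k l, α p k * star (β p' l) = g p p' • (star (β p' l) * α p k)
  α_mul_f : ∀ p p' k, α p k * f p' = f p' * α p k
  α_mul_star_f : ∀ p p' k, α p k * star (f p') = g p p' • (star (f p') * α p k)
  β_mul_β : ∀ p p' k l, β p k * β p' l = β p' l * β p k
  β_mul_star_β : ∀ p p' k l,
    β p k * star (β p' l) = (g p p' * g k l) • (star (β p' l) * β p k)
  f_mul_star_f : ∀ p p', f p * star (f p') - g p p' • (star (f p') * f p)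
    = (if p = p' then (1 : 𝕜) else 0) • (1 : H) - (∑ᶠ k, α p k * star (α p' k))
      + g p p' • ∑ᶠ k, star (β p' k) * β p k

namespace MRelations

variable {𝕜 ι H : Type*} [Field 𝕜] [DecidableEq ι] [Ring H] [Algebra 𝕜 H] [StarRing H]
  {q : 𝕜} {g : ι → ι → 𝕜} {α β : ι → ι → H} {f : ι → H}

theorem g_self (hR : MRelations q g α β f) (p : ι) : g p p = q := by simp [hR.g_eq]

theorem g_of_ne (hR : MRelations q g α β f) {p p' : ι} (h : p ≠ p') : g p p' = 1 := by
  simp [hR.g_eq, h]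

theorem g_ne_zero (hR : MRelations q g α β f) (p p' : ι) : g p p' ≠ 0 := by
  rw [hR.g_eq]; split_ifs
  exacts [hR.q_ne_zero, one_ne_zero]

theorem g_comm (hR : MRelations q g α β f) (p p' : ι) : g p p' = g p' p := by
  simp only [hR.g_eq, eq_comm]

theorem g_eq_of_eq_one_iff (hR : MRelations q g α β f) {a b c d : ι}
    (h : g a b = 1 ↔ g c d = 1) : g a b = g c d := by
  rw [hR.g_eq a b, hR.g_eq c d] at h ⊢
  split_ifs at h ⊢ <;> simp_all

theorem mul_starAlgebraMap_g (hR : MRelations q g α β f) {x : H}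
    (hx : x * starAlgebraMap H q = q • x) (a b : ι) :
    x * starAlgebraMap H (g a b) = g a b • x := by
  rcases eq_or_ne a b with rfl | hab
  · rwa [hR.g_self]
  · rw [hR.g_of_ne hab, starAlgebraMap_one, mul_one, one_smul]

theorem mul_starAlgebraMap_g_inv (hR : MRelations q g α β f) {x : H}
    (hx : x * starAlgebraMap H q = q • x) (a b : ι) :
    x * starAlgebraMap H (g a b)⁻¹ = (g a b)⁻¹ • x :=
  mul_starAlgebraMap_inv (hR.g_ne_zero a b) (hR.mul_starAlgebraMap_g hx a b)

theorem finsum_smul_g (hR : MRelations q g α β f) {X : ι → H} (hX : (support X).Finite)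
    (w : ι) : ∑ᶠ k, (q * (g w k)⁻¹) • X k = q • ∑ᶠ k, X k - (q - 1) • X w := by
  have hterm (k : ι) : (q * (g w k)⁻¹) • X k = q • X k - if k = w then (q - 1) • X w else 0 := by
    rcases eq_or_ne k w with rfl | hkw
    · rw [hR.g_self, mul_inv_cancel₀ hR.q_ne_zero, if_pos rfl, ← sub_smul, sub_sub_cancel]
    · rw [hR.g_of_ne (Ne.symm hkw), inv_one, mul_one, if_neg hkw, sub_zero]
  have hqX : (support fun k => q • X k).Finite :=
    hX.subset fun k hk h0 => hk (by simp [h0])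
  have hw : (support fun k => if k = w then (q - 1) • X w else 0).Finite :=
    (Set.finite_singleton w).subset fun k hk => by_contra fun h => hk (if_neg h)
  rw [finsum_congr hterm, finsum_sub_distrib hqX hw, smul_finsum' q hX,
    finsum_eq_single _ w fun k hk => if_neg hk, if_pos rfl]

theorem α_mul_α_mul_star_α (hR : MRelations q g α β f) (p w k : ι) :
    α p w * (α p k * star (α p k)) = (q * (g w k)⁻¹) • (α p k * star (α p k) * α p w) := by
  rw [← mul_assoc, hR.α_mul_α p p w k, mul_assoc, hR.α_mul_star_α, hR.g_self, mul_smul_comm,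
    mul_assoc]

theorem α_mul_star_β_mul_β (hR : MRelations q g α β f) (p w k : ι) :
    α p w * (star (β p k) * β p k) = (q * (g w k)⁻¹) • (star (β p k) * β p k * α p w) := by
  rw [← mul_assoc, hR.α_mul_star_β, hR.g_self, smul_mul_assoc, mul_assoc, hR.α_mul_β,
    mul_smul_comm, smul_smul, ← mul_assoc]

theorem α_mul_f_mul_star_f_sub (hR : MRelations q g α β f) {s : H} (hs : ∀ x, Commute s x)
    (p w : ι) :
    α p w * (f p * star (f p) - star (f p) * f p * s)
      = q • ((f p * star (f p) - star (f p) * f p * s) * α p w) := by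
  have hf := hR.α_mul_f p p w
  have hf' : α p w * star (f p) = q • (star (f p) * α p w) := by
    rw [hR.α_mul_star_f, hR.g_self]
  rw [mul_sub, sub_mul, smul_sub, ← mul_assoc, hf, mul_assoc, hf', ← mul_assoc, ← mul_assoc,
    hf', mul_smul_comm, smul_mul_assoc, smul_mul_assoc, mul_assoc (star (f p)), hf]
  simp only [mul_assoc, (hs (α p w)).eq]

/-- Both sides of `hT` are `q`-commuted by `α p w`; on the right this holds termwise except for
`1` and the two summands indexed by `w`, whose defect must therefore vanish. -/
theorem α_eq_sub_mul_of_central (hR : MRelations q g α β f) (hq : q ≠ 1) {s : H}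
    (hs : ∀ x, Commute s x) (p w : ι)
    (hT : f p * star (f p) - star (f p) * f p * s
      = 1 - ∑ᶠ k, α p k * star (α p k) + (∑ᶠ k, star (β p k) * β p k) * s) :
    α p w = α p w * star (α p w) * α p w - star (β p w) * β p w * α p w * s := by
  have fin_α {F : ι → H} (hF : ∀ k, α p k = 0 → F k = 0) : (support F).Finite :=
    finite_support_of_imp_eq_zero (hR.finite_support_α p) hF
  have fin_β {F : ι → H} (hF : ∀ k, β p k = 0 → F k = 0) : (support F).Finite :=
    finite_support_of_imp_eq_zero (hR.finite_support_β p) hF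
  have hαα := fin_α (F := fun k => α p k * star (α p k)) fun k h0 => by simp [h0]
  have hββ := fin_β (F := fun k => star (β p k) * β p k) fun k h0 => by simp [h0]
  have hααα := fin_α (F := fun k => α p k * star (α p k) * α p w) fun k h0 => by simp [h0]
  have hβββ := fin_β (F := fun k => star (β p k) * β p k * α p w) fun k h0 => by simp [h0]
  have hαT := hR.α_mul_f_mul_star_f_sub hs p w
  rw [hT] at hαT
  have hleft : α p w * (1 - ∑ᶠ k, α p k * star (α p k) + (∑ᶠ k, star (β p k) * β p k) * s)
      = α p w - (q • ∑ᶠ k, α p k * star (α p k) * α p w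
          - (q - 1) • (α p w * star (α p w) * α p w))
        + (q • ∑ᶠ k, star (β p k) * β p k * α p w
          - (q - 1) • (star (β p w) * β p w * α p w)) * s := by
    rw [mul_add, mul_sub, mul_one, ← mul_assoc, mul_finsum' _ _ hαα, mul_finsum' _ _ hββ,
      finsum_congr (hR.α_mul_α_mul_star_α p w), finsum_congr (hR.α_mul_star_β_mul_β p w),
      hR.finsum_smul_g hααα, hR.finsum_smul_g hβββ]
  have hright : (1 - ∑ᶠ k, α p k * star (α p k) + (∑ᶠ k, star (β p k) * β p k) * s) * α p w
      = α p w - ∑ᶠ k, α p k * star (α p k) * α p w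
        + (∑ᶠ k, star (β p k) * β p k * α p w) * s := by
    rw [add_mul, sub_mul, one_mul, mul_assoc _ s, (hs (α p w)).eq, ← mul_assoc,
      finsum_mul' _ _ hαα, finsum_mul' _ _ hββ]
  rw [hleft, hright] at hαT
  have hzero : (1 - q) • (α p w - α p w * star (α p w) * α p w
      + star (β p w) * β p w * α p w * s) = 0 := by
    rw [← sub_eq_zero_of_eq hαT]
    simp only [sub_mul, smul_mul_assoc]
    module
  have := (smul_eq_zero.mp hzero).resolve_left (sub_ne_zero.mpr hq.symm)
  calc α p w = (α p w - α p w * star (α p w) * α p w + star (β p w) * β p w * α p w * s)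
        + α p w * star (α p w) * α p w - star (β p w) * β p w * α p w * s := by abel
    _ = _ := by rw [this, zero_add]

theorem α_eq_sub_smul (hR : MRelations q g α β f) (hq : q ≠ 1) (p w : ι) :
    α p w = α p w * star (α p w) * α p w - q • (star (β p w) * β p w * α p w) := by
  rw [Algebra.smul_def, (Algebra.commute_algebraMap_left q _).eq]
  refine hR.α_eq_sub_mul_of_central hq (Algebra.commute_algebraMap_left q) p w ?_
  have h := hR.f_mul_star_f p p
  rwa [if_pos rfl, one_smul, hR.g_self, Algebra.smul_def, Algebra.smul_def,
    (Algebra.commute_algebraMap_left q _).eq, (Algebra.commute_algebraMap_left q _).eq] at h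

theorem α_eq_sub_mul_starAlgebraMap (hR : MRelations q g α β f) (hq : q ≠ 1) (p w : ι) :
    α p w = α p w * star (α p w) * α p w - star (β p w) * β p w * α p w * starAlgebraMap H q := by
  refine hR.α_eq_sub_mul_of_central hq (commute_starAlgebraMap q) p w ?_
  have h := hR.f_mul_star_f p p
  rw [if_pos rfl, one_smul, hR.g_self] at h
  replace h := congrArg star h
  simp only [star_sub, star_add, star_one, star_mul, star_star,
    star_smul_eq_star_mul_starAlgebraMap] at h
  simpa only [star_finsum, star_mul, star_star] using h

theorem star_β_mul_β_mul_α_mul_starAlgebraMap (hR : MRelations q g α β f) (hq : q ≠ 1)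
    (p w : ι) :
    star (β p w) * β p w * α p w * starAlgebraMap H q = q • (star (β p w) * β p w * α p w) :=
  (sub_right_inj.mp ((hR.α_eq_sub_mul_starAlgebraMap hq p w).symm.trans
    (hR.α_eq_sub_smul hq p w)))

theorem star_α_eq (hR : MRelations q g α β f) (hq : q ≠ 1) (p w : ι) :
    star (α p w) = star (α p w) * α p w * star (α p w)
      - q • (star (α p w) * (star (β p w) * β p w)) := by
  have h := congrArg star (hR.α_eq_sub_mul_starAlgebraMap hq p w)
  rw [star_sub, star_mul_starAlgebraMap] at h
  simpa only [star_mul, star_star, mul_assoc] using h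

theorem star_α_mul_star_β_mul_β_mul_starAlgebraMap (hR : MRelations q g α β f) (hq : q ≠ 1)
    (p w : ι) (z : H) :
    star (α p w) * (star (β p w) * β p w) * z * starAlgebraMap H q
      = q • (star (α p w) * (star (β p w) * β p w) * z) := by
  have h := congrArg star (hR.star_β_mul_β_mul_α_mul_starAlgebraMap hq p w)
  rw [star_mul_starAlgebraMap, star_smul_eq_star_mul_starAlgebraMap] at h
  have hv : star (α p w) * (star (β p w) * β p w) * starAlgebraMap H q
      = q • (star (α p w) * (star (β p w) * β p w)) := by
    simpa only [star_mul, star_star, mul_assoc] using h.symm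
  rw [mul_assoc _ z, ← (commute_starAlgebraMap q z).eq, ← mul_assoc, hv, smul_mul_assoc]

theorem β_mul_star_α_eq_mul_starAlgebraMap (hR : MRelations q g α β f) (X Y m n : ι) :
    β Y n * star (α X m) = star (α X m) * β Y n * starAlgebraMap H (g X Y) := by
  simpa only [star_mul, star_star, star_smul_eq_star_mul_starAlgebraMap]
    using congrArg star (hR.α_mul_star_β X Y m n)

theorem star_β_mul_star_α_eq_mul_starAlgebraMap (hR : MRelations q g α β f) (X Y m n : ι) :
    star (β Y n) * star (α X m) = star (α X m) * star (β Y n) * starAlgebraMap H (g m n)⁻¹ := by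
  simpa only [star_mul, star_smul_eq_star_mul_starAlgebraMap]
    using congrArg star (hR.α_mul_β X Y m n)

theorem g_eq_one (hR : MRelations q g α β f) (hq : q = 1) (a b : ι) : g a b = 1 := by
  rw [hR.g_eq]; split_ifs <;> simp [hq]

theorem β_mul_star_α (hR : MRelations q g α β f) (X Y m n : ι) :
    β Y n * star (α X m) = (g m n)⁻¹ • (star (α X m) * β Y n) := by
  rcases eq_or_ne q 1 with hq | hq
  · rw [hR.β_mul_star_α_eq_mul_starAlgebraMap, hR.g_eq_one hq, hR.g_eq_one hq, inv_one,
      starAlgebraMap_one, mul_one, one_smul]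
  have hβα : β Y n * α X m = g m n • (α X m * β Y n) := by
    rw [hR.α_mul_β, smul_smul, mul_inv_cancel₀ (hR.g_ne_zero m n), one_smul]
  have hββ : β Y n * (star (β X m) * β X m) = (g m n * g X Y) • (star (β X m) * β X m * β Y n) := by
    rw [← mul_assoc, hR.β_mul_star_β Y X n m, hR.g_comm Y X, hR.g_comm n m, mul_comm (g X Y),
      smul_mul_assoc, mul_assoc, hR.β_mul_β Y X n m, mul_assoc]
  rw [eq_inv_smul_iff₀ (hR.g_ne_zero m n)]
  exact (mul_eq_smul_mul_of_twisted_commute (commute_starAlgebraMap _)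
    (isUnit_starAlgebraMap (hR.g_ne_zero X Y)) (hR.star_α_eq hq X m)
    (hR.β_mul_star_α_eq_mul_starAlgebraMap X Y m n) hβα hββ
    (hR.mul_starAlgebraMap_g (hR.star_α_mul_star_β_mul_β_mul_starAlgebraMap hq X m _) X Y)
    rfl).symm

theorem star_β_mul_β (hR : MRelations q g α β f) (X Y m n : ι) :
    star (β Y n) * β X m = (g X Y * g m n)⁻¹ • (β X m * star (β Y n)) := by
  rw [hR.β_mul_star_β X Y m n, smul_smul,
    inv_mul_cancel₀ (mul_ne_zero (hR.g_ne_zero X Y) (hR.g_ne_zero m n)), one_smul]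

theorem star_β_mul_star_α (hR : MRelations q g α β f) (X Y m n : ι) :
    star (β Y n) * star (α X m) = g X Y • (star (α X m) * star (β Y n)) := by
  rcases eq_or_ne q 1 with hq | hq
  · rw [hR.star_β_mul_star_α_eq_mul_starAlgebraMap, hR.g_eq_one hq, hR.g_eq_one hq, inv_one,
      starAlgebraMap_one, mul_one, one_smul]
  have hβα : star (β Y n) * α X m = (g X Y)⁻¹ • (α X m * star (β Y n)) := by
    rw [hR.α_mul_star_β, smul_smul, inv_mul_cancel₀ (hR.g_ne_zero X Y), one_smul]
  have hββ : star (β Y n) * (star (β X m) * β X m)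
      = ((g X Y)⁻¹ * (g m n)⁻¹) • (star (β X m) * β X m * star (β Y n)) := by
    have hstar : star (β Y n) * star (β X m) = star (β X m) * star (β Y n) := by
      simpa only [star_mul] using congrArg star (hR.β_mul_β X Y m n)
    rw [← mul_assoc, hstar, mul_assoc, hR.star_β_mul_β, ← mul_inv, mul_smul_comm, ← mul_assoc]
  rw [← inv_smul_eq_iff₀ (hR.g_ne_zero X Y)]
  exact (mul_eq_smul_mul_of_twisted_commute (commute_starAlgebraMap _)
    (isUnit_starAlgebraMap (inv_ne_zero (hR.g_ne_zero m n))) (hR.star_α_eq hq X m)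
    (hR.star_β_mul_star_α_eq_mul_starAlgebraMap X Y m n) hβα hββ
    (hR.mul_starAlgebraMap_g_inv (hR.star_α_mul_star_β_mul_β_mul_starAlgebraMap hq X m _) m n)
    rfl).symm

theorem g_eq_one_iff_of_star_α_mul_β_ne_zero (hR : MRelations q g α β f) {X Y m n : ι}
    (h : star (α X m) * β Y n ≠ 0) : g X Y = 1 ↔ g m n = 1 := by
  rw [← inv_eq_one (a := g m n)]
  exact eq_one_iff_eq_one_of_mul_starAlgebraMap_eq_smul h
    ((hR.β_mul_star_α_eq_mul_starAlgebraMap X Y m n).symm.trans (hR.β_mul_star_α X Y m n))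

theorem g_eq_one_iff_of_star_α_mul_star_β_ne_zero (hR : MRelations q g α β f) {X Y m n : ι}
    (h : star (α X m) * star (β Y n) ≠ 0) : g m n = 1 ↔ g X Y = 1 := by
  rw [← inv_eq_one (a := g m n)]
  exact eq_one_iff_eq_one_of_mul_starAlgebraMap_eq_smul h
    ((hR.star_β_mul_star_α_eq_mul_starAlgebraMap X Y m n).symm.trans (hR.star_β_mul_star_α X Y m n))

end MRelations

section TensorProduct

variable {R A B : Type*} [CommSemiring R] [Semiring A] [Algebra R A] [Semiring B] [Algebra R B]

theorem finsum_mul_finsum_eq_smul {ι κ : Type*} {F : ι → A} {G : κ → A} {c : R}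
    (hF : (support F).Finite) (hG : (support G).Finite)
    (h : ∀ i j, F i * G j = c • (G j * F i)) :
    (∑ᶠ i, F i) * (∑ᶠ j, G j) = c • ((∑ᶠ j, G j) * ∑ᶠ i, F i) := by
  rw [finsum_eq_sum F hF, finsum_eq_sum G hG, Finset.sum_mul_sum, Finset.sum_mul_sum,
    Finset.sum_comm, Finset.smul_sum]
  exact Finset.sum_congr rfl fun i _ => by
    rw [Finset.smul_sum]; exact Finset.sum_congr rfl fun j _ => h j i

theorem tmul_mul_tmul_eq_smul {x₁ y₁ : A} {x₂ y₂ : B} {c₁ c₂ c : R}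
    (h₁ : x₁ * y₁ = c₁ • (y₁ * x₁)) (h₂ : x₂ * y₂ = c₂ • (y₂ * x₂))
    (hc : y₁ * x₁ ≠ 0 → y₂ * x₂ ≠ 0 → c₁ * c₂ = c) :
    (x₁ ⊗ₜ[R] x₂) * (y₁ ⊗ₜ[R] y₂) = c • ((y₁ ⊗ₜ[R] y₂) * (x₁ ⊗ₜ[R] x₂)) := by
  rw [Algebra.TensorProduct.tmul_mul_tmul, Algebra.TensorProduct.tmul_mul_tmul, h₁, h₂,
    TensorProduct.smul_tmul_smul]
  by_cases h₁' : y₁ * x₁ = 0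
  · simp [h₁']
  by_cases h₂' : y₂ * x₂ = 0
  · simp [h₂']
  rw [hc h₁' h₂']

end TensorProduct

namespace MRelations

variable {𝕜 ι H₁ H₂ : Type*} [Field 𝕜] [DecidableEq ι] [Ring H₁] [Algebra 𝕜 H₁] [StarRing H₁]
  [Ring H₂] [Algebra 𝕜 H₂] [StarRing H₂] {q : 𝕜} {g : ι → ι → 𝕜}
  {α₁ β₁ : ι → ι → H₁} {f₁ : ι → H₁} {α₂ β₂ : ι → ι → H₂} {f₂ : ι → H₂}

theorem α_tmul_α_mul_star_α_tmul_star_α (hR₁ : MRelations q g α₁ β₁ f₁)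
    (hR₂ : MRelations q g α₂ β₂ f₂) (p p' k l η μ : ι) :
    (α₁ p η ⊗ₜ[𝕜] α₂ η k) * (star (α₁ p' μ) ⊗ₜ[𝕜] star (α₂ μ l))
      = (g p p' * (g k l)⁻¹) • ((star (α₁ p' μ) ⊗ₜ[𝕜] star (α₂ μ l)) * (α₁ p η ⊗ₜ[𝕜] α₂ η k)) :=
  tmul_mul_tmul_eq_smul (hR₁.α_mul_star_α p p' η μ) (hR₂.α_mul_star_α η μ k l) fun _ _ => by
    field_simp [hR₁.g_ne_zero η μ]

theorem α_tmul_α_mul_star_β_tmul_β (hR₁ : MRelations q g α₁ β₁ f₁)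
    (hR₂ : MRelations q g α₂ β₂ f₂) (p p' k l η μ : ι) :
    (α₁ p η ⊗ₜ[𝕜] α₂ η k) * (star (β₁ p' μ) ⊗ₜ[𝕜] β₂ μ l)
      = (g p p' * (g k l)⁻¹) • ((star (β₁ p' μ) ⊗ₜ[𝕜] β₂ μ l) * (α₁ p η ⊗ₜ[𝕜] α₂ η k)) :=
  tmul_mul_tmul_eq_smul (hR₁.α_mul_star_β p p' η μ) (hR₂.α_mul_β η μ k l) fun _ _ => rfl

theorem β_tmul_star_β_mul_star_β_tmul_β (hR₁ : MRelations q g α₁ β₁ f₁)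
    (hR₂ : MRelations q g α₂ β₂ f₂) (p p' k l η μ : ι) :
    (β₁ p η ⊗ₜ[𝕜] star (β₂ η k)) * (star (β₁ p' μ) ⊗ₜ[𝕜] β₂ μ l)
      = (g p p' * (g k l)⁻¹) • ((star (β₁ p' μ) ⊗ₜ[𝕜] β₂ μ l) * (β₁ p η ⊗ₜ[𝕜] star (β₂ η k))) :=
  tmul_mul_tmul_eq_smul (hR₁.β_mul_star_β p p' η μ) (hR₂.star_β_mul_β μ η l k) fun _ _ => by
    rw [hR₂.g_comm μ η, hR₂.g_comm l k]
    field_simp [hR₁.g_ne_zero η μ]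

theorem β_tmul_star_β_mul_star_α_tmul_star_α (hR₁ : MRelations q g α₁ β₁ f₁)
    (hR₂ : MRelations q g α₂ β₂ f₂) (p p' k l η μ : ι) :
    (β₁ p η ⊗ₜ[𝕜] star (β₂ η k)) * (star (α₁ p' μ) ⊗ₜ[𝕜] star (α₂ μ l))
      = (g p p' * (g k l)⁻¹)
        • ((star (α₁ p' μ) ⊗ₜ[𝕜] star (α₂ μ l)) * (β₁ p η ⊗ₜ[𝕜] star (β₂ η k))) := by
  refine tmul_mul_tmul_eq_smul (hR₁.β_mul_star_α p' p μ η) (hR₂.star_β_mul_star_α μ η l k)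
    fun h₁ h₂ => ?_
  have hg : g p' p = g l k := hR₁.g_eq_of_eq_one_iff
    ((hR₁.g_eq_one_iff_of_star_α_mul_β_ne_zero h₁).trans
      (hR₂.g_eq_one_iff_of_star_α_mul_star_β_ne_zero h₂).symm)
  rw [hR₁.g_comm p, hR₁.g_comm k, hg, inv_mul_cancel₀ (hR₁.g_ne_zero μ η),
    mul_inv_cancel₀ (hR₁.g_ne_zero l k)]

theorem comul_α_mul_comul_star_α (hR₁ : MRelations q g α₁ β₁ f₁)
    (hR₂ : MRelations q g α₂ β₂ f₂) (p k p' l : ι) :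
    ((∑ᶠ η, α₁ p η ⊗ₜ[𝕜] α₂ η k) + ∑ᶠ η, β₁ p η ⊗ₜ[𝕜] star (β₂ η k))
        * ((∑ᶠ η, star (α₁ p' η) ⊗ₜ[𝕜] star (α₂ η l)) + ∑ᶠ η, star (β₁ p' η) ⊗ₜ[𝕜] β₂ η l)
      = (g p p' * (g k l)⁻¹) •
        (((∑ᶠ η, star (α₁ p' η) ⊗ₜ[𝕜] star (α₂ η l)) + ∑ᶠ η, star (β₁ p' η) ⊗ₜ[𝕜] β₂ η l)
          * ((∑ᶠ η, α₁ p η ⊗ₜ[𝕜] α₂ η k) + ∑ᶠ η, β₁ p η ⊗ₜ[𝕜] star (β₂ η k))) := by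
  have hα := finite_support_of_imp_eq_zero (hR₁.finite_support_α p)
    (F := fun η => α₁ p η ⊗ₜ[𝕜] α₂ η k) fun η h0 => by simp [h0]
  have hβ := finite_support_of_imp_eq_zero (hR₁.finite_support_β p)
    (F := fun η => β₁ p η ⊗ₜ[𝕜] star (β₂ η k)) fun η h0 => by simp [h0]
  have hα' := finite_support_of_imp_eq_zero (hR₁.finite_support_α p')
    (F := fun η => star (α₁ p' η) ⊗ₜ[𝕜] star (α₂ η l)) fun η h0 => by simp [h0]
  have hβ' := finite_support_of_imp_eq_zero (hR₁.finite_support_β p')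
    (F := fun η => star (β₁ p' η) ⊗ₜ[𝕜] β₂ η l) fun η h0 => by simp [h0]
  simp only [add_mul, mul_add, smul_add]
  rw [finsum_mul_finsum_eq_smul hα hα' (hR₁.α_tmul_α_mul_star_α_tmul_star_α hR₂ p p' k l),
    finsum_mul_finsum_eq_smul hα hβ' (hR₁.α_tmul_α_mul_star_β_tmul_β hR₂ p p' k l),
    finsum_mul_finsum_eq_smul hβ hα' (hR₁.β_tmul_star_β_mul_star_α_tmul_star_α hR₂ p p' k l),
    finsum_mul_finsum_eq_smul hβ hβ' (hR₁.β_tmul_star_β_mul_star_β_tmul_β hR₂ p p' k l)]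
  abel

end MRelations

theorem stmt_4_general
    {ι : Type*} [DecidableEq ι] (q : ℂ) (hq : q ≠ 0)
    (g : ι → ι → ℂ) (hg : ∀ p p' : ι, g p p' = if p = p' then q else 1)
    {H₁ : Type*} [Ring H₁] [Algebra ℂ H₁] [StarRing H₁]
    (α₁ β₁ : ι → ι → H₁) (f₁ : ι → H₁)
    (hAfin1 : ∀ p, (Function.support (α₁ p)).Finite)
    (hAfin2 : ∀ p, (Function.support (β₁ p)).Finite)
    (hA1 : ∀ p p' k l : ι, α₁ p k * α₁ p' l = α₁ p' l * α₁ p k)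
    (hA2 : ∀ p p' k l : ι, α₁ p k * star (α₁ p' l) = (g p p' * (g k l)⁻¹) • (star (α₁ p' l) * α₁ p k))
    (hA3 : ∀ p p' k l : ι, α₁ p k * β₁ p' l = (g k l)⁻¹ • (β₁ p' l * α₁ p k))
    (hA4 : ∀ p p' k l : ι, α₁ p k * star (β₁ p' l) = g p p' • (star (β₁ p' l) * α₁ p k))
    (hA5 : ∀ p p' k : ι, α₁ p k * f₁ p' = f₁ p' * α₁ p k)
    (hA6 : ∀ p p' k : ι, α₁ p k * star (f₁ p') = g p p' • (star (f₁ p') * α₁ p k))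
    (hA7 : ∀ p p' k l : ι, β₁ p k * β₁ p' l = β₁ p' l * β₁ p k)
    (hA8 : ∀ p p' k l : ι, β₁ p k * star (β₁ p' l) = (g p p' * g k l) • (star (β₁ p' l) * β₁ p k))
    (hA12 : ∀ p p' : ι, f₁ p * star (f₁ p') - g p p' • (star (f₁ p') * f₁ p)
        = (if p = p' then (1 : ℂ) else 0) • (1 : H₁) - (∑ᶠ k, α₁ p k * star (α₁ p' k))
          + g p p' • ∑ᶠ k, star (β₁ p' k) * β₁ p k)
    {H₂ : Type*} [Ring H₂] [Algebra ℂ H₂] [StarRing H₂]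
    (α₂ β₂ : ι → ι → H₂) (f₂ : ι → H₂)
    (hBfin1 : ∀ p, (Function.support (α₂ p)).Finite)
    (hBfin2 : ∀ p, (Function.support (β₂ p)).Finite)
    (hB1 : ∀ p p' k l : ι, α₂ p k * α₂ p' l = α₂ p' l * α₂ p k)
    (hB2 : ∀ p p' k l : ι, α₂ p k * star (α₂ p' l) = (g p p' * (g k l)⁻¹) • (star (α₂ p' l) * α₂ p k))
    (hB3 : ∀ p p' k l : ι, α₂ p k * β₂ p' l = (g k l)⁻¹ • (β₂ p' l * α₂ p k))
    (hB4 : ∀ p p' k l : ι, α₂ p k * star (β₂ p' l) = g p p' • (star (β₂ p' l) * α₂ p k))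
    (hB5 : ∀ p p' k : ι, α₂ p k * f₂ p' = f₂ p' * α₂ p k)
    (hB6 : ∀ p p' k : ι, α₂ p k * star (f₂ p') = g p p' • (star (f₂ p') * α₂ p k))
    (hB7 : ∀ p p' k l : ι, β₂ p k * β₂ p' l = β₂ p' l * β₂ p k)
    (hB8 : ∀ p p' k l : ι, β₂ p k * star (β₂ p' l) = (g p p' * g k l) • (star (β₂ p' l) * β₂ p k))
    (hB12 : ∀ p p' : ι, f₂ p * star (f₂ p') - g p p' • (star (f₂ p') * f₂ p)
        = (if p = p' then (1 : ℂ) else 0) • (1 : H₂) - (∑ᶠ k, α₂ p k * star (α₂ p' k))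
          + g p p' • ∑ᶠ k, star (β₂ p' k) * β₂ p k)
    (Dα Dαs : ι → ι → H₁ ⊗[ℂ] H₂)
    (hDα : ∀ p k : ι, Dα p k = (∑ᶠ η, α₁ p η ⊗ₜ[ℂ] α₂ η k) + ∑ᶠ η, β₁ p η ⊗ₜ[ℂ] star (β₂ η k))
    (hDαs : ∀ p k : ι, Dαs p k = (∑ᶠ η, star (α₁ p η) ⊗ₜ[ℂ] star (α₂ η k)) + ∑ᶠ η, star (β₁ p η) ⊗ₜ[ℂ] β₂ η k) :
    ∀ p p' k l : ι, Dα p k * Dαs p' l = (g p p' * (g k l)⁻¹) • (Dαs p' l * Dα p k) := by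
  intro p p' k l
  have hR₁ : MRelations q g α₁ β₁ f₁ :=
    ⟨hq, hg, hAfin1, hAfin2, hA1, hA2, hA3, hA4, hA5, hA6, hA7, hA8, hA12⟩
  have hR₂ : MRelations q g α₂ β₂ f₂ :=
    ⟨hq, hg, hBfin1, hBfin2, hB1, hB2, hB3, hB4, hB5, hB6, hB7, hB8, hB12⟩
  rw [hDα, hDαs]
  exact hR₁.comul_α_mul_comul_star_α hR₂ p k p' l

theorem stmt_4
    {ι : Type*} [DecidableEq ι] (q : ℂ) (hq : q ≠ 0)
    (g : ι → ι → ℂ) (hg : ∀ p p' : ι, g p p' = if p = p' then q else 1)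
    {H₁ : Type*} [Ring H₁] [Algebra ℂ H₁] [StarRing H₁]
    (α₁ β₁ : ι → ι → H₁) (f₁ : ι → H₁)
    (hAfin1 : ∀ p, (Function.support (α₁ p)).Finite)
    (hAfin2 : ∀ p, (Function.support (β₁ p)).Finite)
    (hA1 : ∀ p p' k l : ι, α₁ p k * α₁ p' l = α₁ p' l * α₁ p k)
    (hA2 : ∀ p p' k l : ι, α₁ p k * star (α₁ p' l) = (g p p' * (g k l)⁻¹) • (star (α₁ p' l) * α₁ p k))
    (hA3 : ∀ p p' k l : ι, α₁ p k * β₁ p' l = (g k l)⁻¹ • (β₁ p' l * α₁ p k))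
    (hA4 : ∀ p p' k l : ι, α₁ p k * star (β₁ p' l) = g p p' • (star (β₁ p' l) * α₁ p k))
    (hA5 : ∀ p p' k : ι, α₁ p k * f₁ p' = f₁ p' * α₁ p k)
    (hA6 : ∀ p p' k : ι, α₁ p k * star (f₁ p') = g p p' • (star (f₁ p') * α₁ p k))
    (hA7 : ∀ p p' k l : ι, β₁ p k * β₁ p' l = β₁ p' l * β₁ p k)
    (hA8 : ∀ p p' k l : ι, β₁ p k * star (β₁ p' l) = (g p p' * g k l) • (star (β₁ p' l) * β₁ p k))
    (hA9 : ∀ p p' k : ι, β₁ p k * f₁ p' = f₁ p' * β₁ p k)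
    (hA10 : ∀ p p' k : ι, β₁ p k * star (f₁ p') = g p p' • (star (f₁ p') * β₁ p k))
    (hA11 : ∀ p p' : ι, f₁ p * f₁ p' - f₁ p' * f₁ p = ∑ᶠ k, (α₁ p k * β₁ p' k - α₁ p' k * β₁ p k))
    (hA12 : ∀ p p' : ι, f₁ p * star (f₁ p') - g p p' • (star (f₁ p') * f₁ p)
        = (if p = p' then (1 : ℂ) else 0) • (1 : H₁) - (∑ᶠ k, α₁ p k * star (α₁ p' k))
          + g p p' • ∑ᶠ k, star (β₁ p' k) * β₁ p k)
    {H₂ : Type*} [Ring H₂] [Algebra ℂ H₂] [StarRing H₂]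
    (α₂ β₂ : ι → ι → H₂) (f₂ : ι → H₂)
    (hBfin1 : ∀ p, (Function.support (α₂ p)).Finite)
    (hBfin2 : ∀ p, (Function.support (β₂ p)).Finite)
    (hB1 : ∀ p p' k l : ι, α₂ p k * α₂ p' l = α₂ p' l * α₂ p k)
    (hB2 : ∀ p p' k l : ι, α₂ p k * star (α₂ p' l) = (g p p' * (g k l)⁻¹) • (star (α₂ p' l) * α₂ p k))
    (hB3 : ∀ p p' k l : ι, α₂ p k * β₂ p' l = (g k l)⁻¹ • (β₂ p' l * α₂ p k))
    (hB4 : ∀ p p' k l : ι, α₂ p k * star (β₂ p' l) = g p p' • (star (β₂ p' l) * α₂ p k))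
    (hB5 : ∀ p p' k : ι, α₂ p k * f₂ p' = f₂ p' * α₂ p k)
    (hB6 : ∀ p p' k : ι, α₂ p k * star (f₂ p') = g p p' • (star (f₂ p') * α₂ p k))
    (hB7 : ∀ p p' k l : ι, β₂ p k * β₂ p' l = β₂ p' l * β₂ p k)
    (hB8 : ∀ p p' k l : ι, β₂ p k * star (β₂ p' l) = (g p p' * g k l) • (star (β₂ p' l) * β₂ p k))
    (hB9 : ∀ p p' k : ι, β₂ p k * f₂ p' = f₂ p' * β₂ p k)
    (hB10 : ∀ p p' k : ι, β₂ p k * star (f₂ p') = g p p' • (star (f₂ p') * β₂ p k))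
    (hB11 : ∀ p p' : ι, f₂ p * f₂ p' - f₂ p' * f₂ p = ∑ᶠ k, (α₂ p k * β₂ p' k - α₂ p' k * β₂ p k))
    (hB12 : ∀ p p' : ι, f₂ p * star (f₂ p') - g p p' • (star (f₂ p') * f₂ p)
        = (if p = p' then (1 : ℂ) else 0) • (1 : H₂) - (∑ᶠ k, α₂ p k * star (α₂ p' k))
          + g p p' • ∑ᶠ k, star (β₂ p' k) * β₂ p k)
    (Dα Dβ Dαs Dβs : ι → ι → H₁ ⊗[ℂ] H₂) (Df Dfs : ι → H₁ ⊗[ℂ] H₂)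
    (hDα : ∀ p k : ι, Dα p k = (∑ᶠ η, α₁ p η ⊗ₜ[ℂ] α₂ η k) + ∑ᶠ η, β₁ p η ⊗ₜ[ℂ] star (β₂ η k))
    (hDβ : ∀ p k : ι, Dβ p k = (∑ᶠ η, α₁ p η ⊗ₜ[ℂ] β₂ η k) + ∑ᶠ η, β₁ p η ⊗ₜ[ℂ] star (α₂ η k))
    (hDf : ∀ p : ι, Df p = (∑ᶠ η, α₁ p η ⊗ₜ[ℂ] f₂ η) + (∑ᶠ η, β₁ p η ⊗ₜ[ℂ] star (f₂ η)) + f₁ p ⊗ₜ[ℂ] 1)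
    (hDαs : ∀ p k : ι, Dαs p k = (∑ᶠ η, star (α₁ p η) ⊗ₜ[ℂ] star (α₂ η k)) + ∑ᶠ η, star (β₁ p η) ⊗ₜ[ℂ] β₂ η k)
    (hDβs : ∀ p k : ι, Dβs p k = (∑ᶠ η, star (α₁ p η) ⊗ₜ[ℂ] star (β₂ η k)) + ∑ᶠ η, star (β₁ p η) ⊗ₜ[ℂ] α₂ η k)
    (hDfs : ∀ p : ι, Dfs p
        = (∑ᶠ η, star (α₁ p η) ⊗ₜ[ℂ] star (f₂ η)) + (∑ᶠ η, star (β₁ p η) ⊗ₜ[ℂ] f₂ η) + star (f₁ p) ⊗ₜ[ℂ] 1) :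
    ∀ p p' k l : ι, Dα p k * Dαs p' l = (g p p' * (g k l)⁻¹) • (Dαs p' l * Dα p k) :=
  stmt_4_general q hq g hg α₁ β₁ f₁ hAfin1 hAfin2 hA1 hA2 hA3 hA4 hA5 hA6 hA7 hA8 hA12 α₂ β₂ f₂
    hBfin1 hBfin2 hB1 hB2 hB3 hB4 hB5 hB6 hB7 hB8 hB12 Dα Dαs hDα hDαs
end

section
/- The comultiplication preserves the α–f commutation relation: for all p, p', k ∈ ι one has Δα p k * Δf p' = Δf p' * Δα p k in H₁ ⊗[ℂ] H₂. -/
open scoped TensorProduct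

private lemma starCentral' {H : Type*} [Ring H] [Algebra ℂ H] [StarRing H] (c : ℂ) (z : H) :
    star (c • (1 : H)) * z = z * star (c • (1 : H)) := by
  have h1 : star (c • (1 : H)) * z = star (star z * (c • (1 : H))) := by
    rw [star_mul, star_star]
  have h2 : z * star (c • (1 : H)) = star ((c • (1 : H)) * star z) := by
    rw [star_mul, star_star]
  rw [h1, h2, mul_smul_comm, mul_one, smul_mul_assoc, one_mul]

private lemma starSmul' {H : Type*} [Ring H] [Algebra ℂ H] [StarRing H] (c : ℂ) (z : H) :
    star (c • z) = star z * star (c • (1 : H)) := by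
  have hz : c • z = z * (c • (1 : H)) := by rw [mul_smul_comm, mul_one]
  rw [hz, star_mul]
  exact starCentral' c (star z)

private lemma sCmul' {H : Type*} [Ring H] [Algebra ℂ H] [StarRing H] (c d : ℂ) :
    star (c • (1 : H)) * star (d • (1 : H)) = star ((c * d) • (1 : H)) := by
  rw [← star_mul]
  congr 1
  rw [smul_mul_assoc, one_mul, smul_smul, mul_comm d c]

private lemma conj_auxA {H : Type*} [Ring H] {T C x y z : H}
    (hTm : ∀ u v : H, u * (T * v) = T * (u * v))
    (hx : C * x = x * C) (hy : C * y = T * (y * C)) (hz : C * z = T * (z * C)) :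
    C * (x * (y * z)) = T * (T * (x * (y * (z * C)))) := by
  calc C * (x * (y * z)) = (C * x) * (y * z) := (mul_assoc _ _ _).symm
    _ = (x * C) * (y * z) := by rw [hx]
    _ = x * (C * (y * z)) := mul_assoc _ _ _
    _ = x * ((C * y) * z) := by rw [← mul_assoc C y z]
    _ = x * ((T * (y * C)) * z) := by rw [hy]
    _ = x * (T * ((y * C) * z)) := by rw [mul_assoc T (y * C) z]
    _ = x * (T * (y * (C * z))) := by rw [mul_assoc y C z]
    _ = x * (T * (y * (T * (z * C)))) := by rw [hz]
    _ = x * (T * (T * (y * (z * C)))) := by rw [hTm y (z * C)]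
    _ = T * (x * (T * (y * (z * C)))) := by rw [hTm x (T * (y * (z * C)))]
    _ = T * (T * (x * (y * (z * C)))) := by rw [hTm x (y * (z * C))]

private lemma conj_auxB {H : Type*} [Ring H] {T C x y z : H}
    (hTm : ∀ u v : H, u * (T * v) = T * (u * v))
    (hx : C * x = T * (x * C)) (hy : C * y = y * C) (hz : C * z = T * (z * C)) :
    C * (x * (y * z)) = T * (T * (x * (y * (z * C)))) := by
  calc C * (x * (y * z)) = (C * x) * (y * z) := (mul_assoc _ _ _).symm
    _ = (T * (x * C)) * (y * z) := by rw [hx]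
    _ = T * ((x * C) * (y * z)) := mul_assoc _ _ _
    _ = T * (x * (C * (y * z))) := by rw [mul_assoc x C (y * z)]
    _ = T * (x * ((C * y) * z)) := by rw [← mul_assoc C y z]
    _ = T * (x * ((y * C) * z)) := by rw [hy]
    _ = T * (x * (y * (C * z))) := by rw [mul_assoc y C z]
    _ = T * (x * (y * (T * (z * C)))) := by rw [hz]
    _ = T * (x * (T * (y * (z * C)))) := by rw [hTm y (z * C)]
    _ = T * (T * (x * (y * (z * C)))) := by rw [hTm x (y * (z * C))]

private lemma cancel2' {H : Type*} [Ring H] (X₁ X₂ Y₁ Y₂ A B Cc D : H)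
    (h1 : X₁ - A + B = Y₁ - Cc + D) (h2 : X₂ - A + B = Y₂ - Cc + D) :
    X₁ - Y₁ = X₂ - Y₂ := by
  have h5 : X₁ - X₂ = Y₁ - Y₂ := by
    calc X₁ - X₂ = (X₁ - A + B) - (X₂ - A + B) := by abel
      _ = (Y₁ - Cc + D) - (Y₂ - Cc + D) := by rw [h1, h2]
      _ = Y₁ - Y₂ := by abel
  have h6 : X₁ - Y₁ - (X₂ - Y₂) = (X₁ - X₂) - (Y₁ - Y₂) := by abel
  rw [h5, sub_self] at h6
  exact sub_eq_zero.mp h6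

private lemma keyH {ι : Type*} [DecidableEq ι] (q : ℂ) (hq : q ≠ 0)
    (g : ι → ι → ℂ) (hg : ∀ p p' : ι, g p p' = if p = p' then q else 1)
    {H : Type*} [Ring H] [Algebra ℂ H] [StarRing H]
    (α β : ι → ι → H) (f : ι → H)
    (hfin1 : ∀ p, (Function.support (α p)).Finite)
    (hfin2 : ∀ p, (Function.support (β p)).Finite)
    (hB3 : ∀ p p' k l : ι, α p k * β p' l = (g k l)⁻¹ • (β p' l * α p k))
    (hB4 : ∀ p p' k l : ι, α p k * star (β p' l) = g p p' • (star (β p' l) * α p k))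
    (hB5 : ∀ p p' k : ι, α p k * f p' = f p' * α p k)
    (hB6 : ∀ p p' k : ι, α p k * star (f p') = g p p' • (star (f p') * α p k))
    (hB7 : ∀ p p' k l : ι, β p k * β p' l = β p' l * β p k)
    (hB8 : ∀ p p' k l : ι, β p k * star (β p' l) = (g p p' * g k l) • (star (β p' l) * β p k))
    (hB9 : ∀ p p' k : ι, β p k * f p' = f p' * β p k)
    (hB10 : ∀ p p' k : ι, β p k * star (f p') = g p p' • (star (f p') * β p k))
    (hB12 : ∀ p p' : ι, f p * star (f p') - g p p' • (star (f p') * f p)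
        = (if p = p' then (1 : ℂ) else 0) • (1 : H) - (∑ᶠ k, α p k * star (α p' k))
          + g p p' • ∑ᶠ k, star (β p' k) * β p k) :
    ∀ a b k : ι, f b * star (β a k) = g a b • (star (β a k) * f b) := by
  -- star of hB10
  have hfb : ∀ a b m : ι, f b * star (β a m) = star (g a b • (1 : H)) * (star (β a m) * f b) := by
    intro a b m
    have h := congrArg star (hB10 a b m)
    rw [star_mul, star_star, starSmul', star_mul, star_star] at h
    rw [h]
    exact (starCentral' _ _).symm
  intro a b k0
  by_cases hab : a = b
  · subst hab
    have hgq : g a a = q := by rw [hg, if_pos rfl]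
    rw [hgq]
    by_cases hq1 : q = 1
    · have h := hfb a a k0
      rw [hgq, hq1, one_smul, star_one, one_mul] at h
      rw [h, hq1, one_smul]
    · -- main case
      have hgne : ∀ m l : ι, g m l ≠ 0 := by
        intro m l
        rw [hg]
        split
        · exact hq
        · exact one_ne_zero
      -- central element moves
      have hTm : ∀ u v : H, u * (star (q • (1 : H)) * v) = star (q • (1 : H)) * (u * v) := by
        intro u v
        rw [← mul_assoc, ← starCentral' q u, mul_assoc]
      have hZm : ∀ (c : ℂ) (u v : H), u * (star (c • (1 : H)) * v) = star (c • (1 : H)) * (u * v) := by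
        intro c u v
        rw [← mul_assoc, ← starCentral' c u, mul_assoc]
      -- transports
      have tc_a : ∀ m, f a * α a m = α a m * f a := fun m => (hB5 a a m).symm
      have tc_b : ∀ m, f a * β a m = β a m * f a := fun m => (hB9 a a m).symm
      have tc_sb : ∀ m, f a * star (β a m) = star (q • (1 : H)) * (star (β a m) * f a) := by
        intro m
        have h := hfb a a m
        rwa [hgq] at h
      have tc_sa : ∀ m, f a * star (α a m) = star (q • (1 : H)) * (star (α a m) * f a) := by
        intro m
        have h := congrArg star (hB6 a a m)
        rw [star_mul, star_star, starSmul', star_mul, star_star, hgq] at h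
        rw [h]
        exact (starCentral' _ _).symm
      have hcsb : star (f a) * star (β a k0) = star (β a k0) * star (f a) := by
        have h := congrArg star (hB9 a a k0)
        rwa [star_mul, star_mul] at h
      have tb_a' : ∀ m, star (β a k0) * α a m = q⁻¹ • (α a m * star (β a k0)) := by
        intro m
        have h := hB4 a a m k0
        rw [hgq] at h
        rw [h, smul_smul, inv_mul_cancel₀ hq, one_smul]
      have tb_sa : ∀ m, star (β a k0) * star (α a m)
          = star ((g m k0)⁻¹ • (1 : H)) * (star (α a m) * star (β a k0)) := by
        intro m
        have h := congrArg star (hB3 a a m k0)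
        rw [star_mul, starSmul', star_mul] at h
        rw [h]
        exact (starCentral' _ _).symm
      have tb_b' : ∀ m, star (β a k0) * β a m = (q * g m k0)⁻¹ • (β a m * star (β a k0)) := by
        intro m
        have h := hB8 a a m k0
        rw [hgq] at h
        rw [h, smul_smul, inv_mul_cancel₀ (mul_ne_zero hq (hgne m k0)), one_smul]
      have tb_sb : ∀ m, star (β a k0) * star (β a m) = star (β a m) * star (β a k0) := by
        intro m
        have h := congrArg star (hB7 a a m k0)
        rwa [star_mul, star_mul] at h
      -- the finite index set
      set u : Finset ι := (hfin1 a).toFinset ∪ (hfin2 a).toFinset with hu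
      have h12 := hB12 a a
      rw [if_pos rfl, one_smul, hgq] at h12
      have hPs : (∑ᶠ m, α a m * star (α a m)) = ∑ m ∈ u, α a m * star (α a m) := by
        apply finsum_eq_finset_sum_of_support_subset
        intro m hm
        simp only [Function.mem_support, ne_eq] at hm
        have h1 : α a m ≠ 0 := left_ne_zero_of_mul hm
        simp only [hu, Finset.coe_union, Set.Finite.coe_toFinset, Set.mem_union,
          Function.mem_support, ne_eq]
        exact Or.inl h1
      have hQs : (∑ᶠ m, star (β a m) * β a m) = ∑ m ∈ u, star (β a m) * β a m := by
        apply finsum_eq_finset_sum_of_support_subset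
        intro m hm
        simp only [Function.mem_support, ne_eq] at hm
        have h1 : β a m ≠ 0 := right_ne_zero_of_mul hm
        simp only [hu, Finset.coe_union, Set.Finite.coe_toFinset, Set.mem_union,
          Function.mem_support, ne_eq]
        exact Or.inr h1
      rw [hPs, hQs] at h12
      -- the D * bs = T * (bs * D) identity
      have hDb : (f a * star (f a) - q • (star (f a) * f a)) * star (β a k0)
          = star (q • (1 : H)) * (star (β a k0) * (f a * star (f a) - q • (star (f a) * f a))) := by
        have e1 : (f a * star (f a)) * star (β a k0)
            = star (q • (1 : H)) * (star (β a k0) * (f a * star (f a))) := by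
          calc (f a * star (f a)) * star (β a k0)
              = f a * (star (f a) * star (β a k0)) := mul_assoc _ _ _
            _ = f a * (star (β a k0) * star (f a)) := by rw [hcsb]
            _ = (f a * star (β a k0)) * star (f a) := (mul_assoc _ _ _).symm
            _ = (star (q • (1 : H)) * (star (β a k0) * f a)) * star (f a) := by rw [tc_sb k0]
            _ = star (q • (1 : H)) * (star (β a k0) * (f a * star (f a))) := by
                rw [mul_assoc, mul_assoc]
        have e2 : (star (f a) * f a) * star (β a k0)
            = star (q • (1 : H)) * (star (β a k0) * (star (f a) * f a)) := by
          calc (star (f a) * f a) * star (β a k0)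
              = star (f a) * (f a * star (β a k0)) := mul_assoc _ _ _
            _ = star (f a) * (star (q • (1 : H)) * (star (β a k0) * f a)) := by rw [tc_sb k0]
            _ = star (q • (1 : H)) * (star (f a) * (star (β a k0) * f a)) := hTm _ _
            _ = star (q • (1 : H)) * ((star (f a) * star (β a k0)) * f a) := by
                rw [← mul_assoc (star (f a)) (star (β a k0)) (f a)]
            _ = star (q • (1 : H)) * ((star (β a k0) * star (f a)) * f a) := by rw [hcsb]
            _ = star (q • (1 : H)) * (star (β a k0) * (star (f a) * f a)) := by
                rw [mul_assoc (star (β a k0)) (star (f a)) (f a)]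
        rw [sub_mul, smul_mul_assoc, e1, e2, mul_sub, mul_smul_comm, mul_sub, mul_smul_comm]
      have hI : (1 - (∑ m ∈ u, α a m * star (α a m)) + q • ∑ m ∈ u, star (β a m) * β a m)
            * star (β a k0)
          = star (q • (1 : H)) * (star (β a k0)
            * (1 - (∑ m ∈ u, α a m * star (α a m)) + q • ∑ m ∈ u, star (β a m) * β a m)) := by
        rw [← h12]
        exact hDb
      -- per-term transports of bs through P and Q
      have f1 : ∀ m, star (β a k0) * (α a m * star (α a m))
          = q⁻¹ • (star ((g m k0)⁻¹ • (1 : H)) * (α a m * (star (α a m) * star (β a k0)))) := by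
        intro m
        calc star (β a k0) * (α a m * star (α a m))
            = (star (β a k0) * α a m) * star (α a m) := (mul_assoc _ _ _).symm
          _ = (q⁻¹ • (α a m * star (β a k0))) * star (α a m) := by rw [tb_a' m]
          _ = q⁻¹ • (α a m * (star (β a k0) * star (α a m))) := by
              rw [smul_mul_assoc, mul_assoc]
          _ = q⁻¹ • (α a m * (star ((g m k0)⁻¹ • (1 : H)) * (star (α a m) * star (β a k0)))) := by
              rw [tb_sa m]
          _ = q⁻¹ • (star ((g m k0)⁻¹ • (1 : H)) * (α a m * (star (α a m) * star (β a k0)))) := by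
              rw [hZm]
      have f2 : ∀ m, star (β a k0) * (star (β a m) * β a m)
          = (q * g m k0)⁻¹ • (star (β a m) * (β a m * star (β a k0))) := by
        intro m
        calc star (β a k0) * (star (β a m) * β a m)
            = (star (β a k0) * star (β a m)) * β a m := (mul_assoc _ _ _).symm
          _ = (star (β a m) * star (β a k0)) * β a m := by rw [tb_sb m]
          _ = star (β a m) * (star (β a k0) * β a m) := mul_assoc _ _ _
          _ = star (β a m) * ((q * g m k0)⁻¹ • (β a m * star (β a k0))) := by rw [tb_b' m]
          _ = (q * g m k0)⁻¹ • (star (β a m) * (β a m * star (β a k0))) := by rw [mul_smul_comm]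
      have hsc : ∀ m, q * (q * g m k0)⁻¹ = (g m k0)⁻¹ := by
        intro m
        rw [mul_inv, ← mul_assoc, mul_inv_cancel₀ hq, one_mul]
      -- normalize hI
      simp only [mul_assoc, mul_add, add_mul, mul_sub, sub_mul, mul_one, one_mul,
        smul_mul_assoc, mul_smul_comm, Finset.mul_sum, Finset.sum_mul, Finset.smul_sum] at hI
      have e1sum : ∑ m ∈ u, star (q • (1 : H)) * (star (β a k0) * (α a m * star (α a m)))
          = ∑ m ∈ u, q⁻¹ • (star ((q * (g m k0)⁻¹) • (1 : H))
              * (α a m * (star (α a m) * star (β a k0)))) := by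
        refine Finset.sum_congr rfl fun m _ => ?_
        rw [f1 m, mul_smul_comm, ← mul_assoc, sCmul']
      have e2sum : ∑ m ∈ u, q • (star (q • (1 : H)) * (star (β a k0) * (star (β a m) * β a m)))
          = ∑ m ∈ u, (g m k0)⁻¹ • (star (q • (1 : H))
              * (star (β a m) * (β a m * star (β a k0)))) := by
        refine Finset.sum_congr rfl fun m _ => ?_
        rw [f2 m, mul_smul_comm, smul_smul, hsc m]
      rw [e1sum, e2sum] at hI
      -- hI is now the master identity; derive the three shifted versions
      -- right multiplication by f a
      have hD2 := congrArg (fun z => z * f a) hI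
      simp only [mul_assoc, mul_add, add_mul, mul_sub, sub_mul, mul_one, one_mul,
        smul_mul_assoc, mul_smul_comm, Finset.mul_sum, Finset.sum_mul, Finset.smul_sum] at hD2
      -- left multiplication by f a
      have hC2 := congrArg (fun z => f a * z) hI
      simp only [mul_assoc, mul_add, add_mul, mul_sub, sub_mul, mul_one, one_mul,
        smul_mul_assoc, mul_smul_comm, Finset.mul_sum, Finset.sum_mul, Finset.smul_sum] at hC2
      have e5 : ∑ m ∈ u, f a * (α a m * (star (α a m) * star (β a k0)))
          = ∑ m ∈ u, star (q • (1 : H)) * (star (q • (1 : H))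
              * (α a m * (star (α a m) * (star (β a k0) * f a)))) :=
        Finset.sum_congr rfl fun m _ => conj_auxA hTm (tc_a m) (tc_sa m) (tc_sb k0)
      have e6 : ∑ m ∈ u, q • (f a * (star (β a m) * (β a m * star (β a k0))))
          = ∑ m ∈ u, q • (star (q • (1 : H)) * (star (q • (1 : H))
              * (star (β a m) * (β a m * (star (β a k0) * f a))))) :=
        Finset.sum_congr rfl fun m _ => by
          rw [conj_auxB hTm (tc_sb m) (tc_b m) (tc_sb k0)]
      have e7 : ∑ m ∈ u, q⁻¹ • (f a * (star ((q * (g m k0)⁻¹) • (1 : H))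
              * (α a m * (star (α a m) * star (β a k0)))))
          = ∑ m ∈ u, q⁻¹ • (star (q • (1 : H)) * (star (q • (1 : H))
              * (star ((q * (g m k0)⁻¹) • (1 : H))
                * (α a m * (star (α a m) * (star (β a k0) * f a)))))) :=
        Finset.sum_congr rfl fun m _ => by
          rw [hZm (q * (g m k0)⁻¹) (f a), conj_auxA hTm (tc_a m) (tc_sa m) (tc_sb k0), hTm, hTm]
      have e8 : ∑ m ∈ u, (g m k0)⁻¹ • (f a * (star (q • (1 : H))
              * (star (β a m) * (β a m * star (β a k0)))))
          = ∑ m ∈ u, (g m k0)⁻¹ • (star (q • (1 : H)) * (star (q • (1 : H))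
              * (star (q • (1 : H)) * (star (β a m) * (β a m * (star (β a k0) * f a)))))) :=
        Finset.sum_congr rfl fun m _ => by
          rw [hTm (f a), conj_auxB hTm (tc_sb m) (tc_b m) (tc_sb k0)]
      rw [e5, e6, e7, e8, hTm (f a) (star (β a k0)), tc_sb k0] at hC2
      -- double-T left multiplication of hD2
      have hD3 := congrArg (fun z => star (q • (1 : H)) * (star (q • (1 : H)) * z)) hD2
      simp only [mul_assoc, mul_add, add_mul, mul_sub, sub_mul, mul_one, one_mul,
        smul_mul_assoc, mul_smul_comm, Finset.mul_sum, Finset.sum_mul, Finset.smul_sum] at hD3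
      -- cancel the sums
      have hkey0 :
          star (q • (1 : H)) * (star (β a k0) * f a)
            - star (q • (1 : H)) * (star (q • (1 : H)) * (star (β a k0) * f a))
          = star (q • (1 : H)) * (star (q • (1 : H)) * (star (β a k0) * f a))
            - star (q • (1 : H)) * (star (q • (1 : H))
                * (star (q • (1 : H)) * (star (β a k0) * f a))) :=
        cancel2' _ _ _ _ _ _ _ _ hC2 hD3
      -- strip one T
      have hTinv : star (q⁻¹ • (1 : H)) * star (q • (1 : H)) = 1 := by
        rw [sCmul', inv_mul_cancel₀ hq, one_smul, star_one]
      have hTi : ∀ x : H, star (q⁻¹ • (1 : H)) * (star (q • (1 : H)) * x) = x := by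
        intro x
        rw [← mul_assoc, hTinv, one_mul]
      have hkey1 : star (β a k0) * f a - star (q • (1 : H)) * (star (β a k0) * f a)
          = star (q • (1 : H)) * (star (β a k0) * f a)
            - star (q • (1 : H)) * (star (q • (1 : H)) * (star (β a k0) * f a)) := by
        have h := congrArg (fun z => star (q⁻¹ • (1 : H)) * z) hkey0
        simp only [mul_sub] at h
        rw [hTi, hTi, hTi] at h
        exact h
      -- apply star
      have hstar := congrArg star hkey1
      simp only [star_sub, star_mul, star_star] at hstar
      have hzq : ∀ z : H, z * star (star (q • (1 : H))) = q • z := by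
        intro z
        rw [star_star, mul_smul_comm, mul_one]
      simp only [star_star, mul_smul_comm, mul_one, mul_assoc] at hstar
      -- hstar should now read  W - q•W = q•W - q•(q•W)  with W = star (f a) * β a k0
      have hq1' : ((1 : ℂ) - q) ≠ 0 := sub_ne_zero.mpr fun h => hq1 h.symm
      have hzero : (((1 : ℂ) - q) * ((1 : ℂ) - q)) • (star (f a) * β a k0) = 0 := by
        have hscal : ((1 : ℂ) - q) * ((1 : ℂ) - q) = 1 - q - (q - q * q) := by ring
        rw [hscal, sub_smul, sub_smul, sub_smul, one_smul, mul_smul, hstar, sub_self]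
      have hW0 : star (f a) * β a k0 = 0 := by
        have hne : ((1 : ℂ) - q) * ((1 : ℂ) - q) ≠ 0 := mul_ne_zero hq1' hq1'
        calc star (f a) * β a k0
            = ((((1 : ℂ) - q) * ((1 : ℂ) - q))⁻¹ * (((1 : ℂ) - q) * ((1 : ℂ) - q)))
                • (star (f a) * β a k0) := by rw [inv_mul_cancel₀ hne, one_smul]
          _ = (((1 : ℂ) - q) * ((1 : ℂ) - q))⁻¹
                • ((((1 : ℂ) - q) * ((1 : ℂ) - q)) • (star (f a) * β a k0)) := by rw [mul_smul]
          _ = 0 := by rw [hzero, smul_zero]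
      have hw : star (β a k0) * f a = 0 := by
        have h := congrArg star hW0
        rwa [star_mul, star_star, star_zero] at h
      rw [tc_sb k0, hw, mul_zero, smul_zero]
  · have hg1 : g a b = 1 := by rw [hg, if_neg hab]
    have h := hfb a b k0
    rw [hg1, one_smul, star_one, one_mul] at h
    rw [h, hg1, one_smul]

theorem stmt_7
    {ι : Type*} [DecidableEq ι] (q : ℂ) (hq : q ≠ 0)
    (g : ι → ι → ℂ) (hg : ∀ p p' : ι, g p p' = if p = p' then q else 1)
    {H₁ : Type*} [Ring H₁] [Algebra ℂ H₁] [StarRing H₁]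
    (α₁ β₁ : ι → ι → H₁) (f₁ : ι → H₁)
    (hAfin1 : ∀ p, (Function.support (α₁ p)).Finite)
    (hAfin2 : ∀ p, (Function.support (β₁ p)).Finite)
    (hA1 : ∀ p p' k l : ι, α₁ p k * α₁ p' l = α₁ p' l * α₁ p k)
    (hA2 : ∀ p p' k l : ι, α₁ p k * star (α₁ p' l) = (g p p' * (g k l)⁻¹) • (star (α₁ p' l) * α₁ p k))
    (hA3 : ∀ p p' k l : ι, α₁ p k * β₁ p' l = (g k l)⁻¹ • (β₁ p' l * α₁ p k))
    (hA4 : ∀ p p' k l : ι, α₁ p k * star (β₁ p' l) = g p p' • (star (β₁ p' l) * α₁ p k))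
    (hA5 : ∀ p p' k : ι, α₁ p k * f₁ p' = f₁ p' * α₁ p k)
    (hA6 : ∀ p p' k : ι, α₁ p k * star (f₁ p') = g p p' • (star (f₁ p') * α₁ p k))
    (hA7 : ∀ p p' k l : ι, β₁ p k * β₁ p' l = β₁ p' l * β₁ p k)
    (hA8 : ∀ p p' k l : ι, β₁ p k * star (β₁ p' l) = (g p p' * g k l) • (star (β₁ p' l) * β₁ p k))
    (hA9 : ∀ p p' k : ι, β₁ p k * f₁ p' = f₁ p' * β₁ p k)
    (hA10 : ∀ p p' k : ι, β₁ p k * star (f₁ p') = g p p' • (star (f₁ p') * β₁ p k))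
    (hA11 : ∀ p p' : ι, f₁ p * f₁ p' - f₁ p' * f₁ p = ∑ᶠ k, (α₁ p k * β₁ p' k - α₁ p' k * β₁ p k))
    (hA12 : ∀ p p' : ι, f₁ p * star (f₁ p') - g p p' • (star (f₁ p') * f₁ p)
        = (if p = p' then (1 : ℂ) else 0) • (1 : H₁) - (∑ᶠ k, α₁ p k * star (α₁ p' k))
          + g p p' • ∑ᶠ k, star (β₁ p' k) * β₁ p k)
    {H₂ : Type*} [Ring H₂] [Algebra ℂ H₂] [StarRing H₂]
    (α₂ β₂ : ι → ι → H₂) (f₂ : ι → H₂)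
    (hBfin1 : ∀ p, (Function.support (α₂ p)).Finite)
    (hBfin2 : ∀ p, (Function.support (β₂ p)).Finite)
    (hB1 : ∀ p p' k l : ι, α₂ p k * α₂ p' l = α₂ p' l * α₂ p k)
    (hB2 : ∀ p p' k l : ι, α₂ p k * star (α₂ p' l) = (g p p' * (g k l)⁻¹) • (star (α₂ p' l) * α₂ p k))
    (hB3 : ∀ p p' k l : ι, α₂ p k * β₂ p' l = (g k l)⁻¹ • (β₂ p' l * α₂ p k))
    (hB4 : ∀ p p' k l : ι, α₂ p k * star (β₂ p' l) = g p p' • (star (β₂ p' l) * α₂ p k))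
    (hB5 : ∀ p p' k : ι, α₂ p k * f₂ p' = f₂ p' * α₂ p k)
    (hB6 : ∀ p p' k : ι, α₂ p k * star (f₂ p') = g p p' • (star (f₂ p') * α₂ p k))
    (hB7 : ∀ p p' k l : ι, β₂ p k * β₂ p' l = β₂ p' l * β₂ p k)
    (hB8 : ∀ p p' k l : ι, β₂ p k * star (β₂ p' l) = (g p p' * g k l) • (star (β₂ p' l) * β₂ p k))
    (hB9 : ∀ p p' k : ι, β₂ p k * f₂ p' = f₂ p' * β₂ p k)
    (hB10 : ∀ p p' k : ι, β₂ p k * star (f₂ p') = g p p' • (star (f₂ p') * β₂ p k))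
    (hB11 : ∀ p p' : ι, f₂ p * f₂ p' - f₂ p' * f₂ p = ∑ᶠ k, (α₂ p k * β₂ p' k - α₂ p' k * β₂ p k))
    (hB12 : ∀ p p' : ι, f₂ p * star (f₂ p') - g p p' • (star (f₂ p') * f₂ p)
        = (if p = p' then (1 : ℂ) else 0) • (1 : H₂) - (∑ᶠ k, α₂ p k * star (α₂ p' k))
          + g p p' • ∑ᶠ k, star (β₂ p' k) * β₂ p k)
    (Dα Dβ Dαs Dβs : ι → ι → H₁ ⊗[ℂ] H₂) (Df Dfs : ι → H₁ ⊗[ℂ] H₂)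
    (hDα : ∀ p k : ι, Dα p k = (∑ᶠ η, α₁ p η ⊗ₜ[ℂ] α₂ η k) + ∑ᶠ η, β₁ p η ⊗ₜ[ℂ] star (β₂ η k))
    (hDβ : ∀ p k : ι, Dβ p k = (∑ᶠ η, α₁ p η ⊗ₜ[ℂ] β₂ η k) + ∑ᶠ η, β₁ p η ⊗ₜ[ℂ] star (α₂ η k))
    (hDf : ∀ p : ι, Df p = (∑ᶠ η, α₁ p η ⊗ₜ[ℂ] f₂ η) + (∑ᶠ η, β₁ p η ⊗ₜ[ℂ] star (f₂ η)) + f₁ p ⊗ₜ[ℂ] 1)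
    (hDαs : ∀ p k : ι, Dαs p k = (∑ᶠ η, star (α₁ p η) ⊗ₜ[ℂ] star (α₂ η k)) + ∑ᶠ η, star (β₁ p η) ⊗ₜ[ℂ] β₂ η k)
    (hDβs : ∀ p k : ι, Dβs p k = (∑ᶠ η, star (α₁ p η) ⊗ₜ[ℂ] star (β₂ η k)) + ∑ᶠ η, star (β₁ p η) ⊗ₜ[ℂ] α₂ η k)
    (hDfs : ∀ p : ι, Dfs p
        = (∑ᶠ η, star (α₁ p η) ⊗ₜ[ℂ] star (f₂ η)) + (∑ᶠ η, star (β₁ p η) ⊗ₜ[ℂ] f₂ η) + star (f₁ p) ⊗ₜ[ℂ] 1) :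
    ∀ p p' k : ι, Dα p k * Df p' = Df p' * Dα p k := by
  intro p p' k
  have gsymm : ∀ x y : ι, g x y = g y x := by
    intro x y
    rw [hg, hg]
    by_cases h : x = y
    · rw [if_pos h, if_pos h.symm]
    · rw [if_neg h, if_neg fun hh => h hh.symm]
  have gne : ∀ x y : ι, g x y ≠ 0 := by
    intro x y
    rw [hg]
    split
    · exact hq
    · exact one_ne_zero
  have key := keyH q hq g hg α₂ β₂ f₂ hBfin1 hBfin2 hB3 hB4 hB5 hB6 hB7 hB8 hB9 hB10 hB12
  rw [hDα, hDf]
  have ha : (∑ᶠ η, α₁ p η ⊗ₜ[ℂ] α₂ η k)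
      = ∑ η ∈ (hAfin1 p).toFinset, α₁ p η ⊗ₜ[ℂ] α₂ η k := by
    apply finsum_eq_finset_sum_of_support_subset
    intro x hx
    simp only [Function.mem_support, ne_eq] at hx
    simp only [Set.Finite.coe_toFinset, Function.mem_support, ne_eq]
    intro h0
    exact hx (by rw [h0, TensorProduct.zero_tmul])
  have hb : (∑ᶠ η, β₁ p η ⊗ₜ[ℂ] star (β₂ η k))
      = ∑ η ∈ (hAfin2 p).toFinset, β₁ p η ⊗ₜ[ℂ] star (β₂ η k) := by
    apply finsum_eq_finset_sum_of_support_subset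
    intro x hx
    simp only [Function.mem_support, ne_eq] at hx
    simp only [Set.Finite.coe_toFinset, Function.mem_support, ne_eq]
    intro h0
    exact hx (by rw [h0, TensorProduct.zero_tmul])
  have hxx : (∑ᶠ η, α₁ p' η ⊗ₜ[ℂ] f₂ η)
      = ∑ η ∈ (hAfin1 p').toFinset, α₁ p' η ⊗ₜ[ℂ] f₂ η := by
    apply finsum_eq_finset_sum_of_support_subset
    intro x hx
    simp only [Function.mem_support, ne_eq] at hx
    simp only [Set.Finite.coe_toFinset, Function.mem_support, ne_eq]
    intro h0
    exact hx (by rw [h0, TensorProduct.zero_tmul])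
  have hyy : (∑ᶠ η, β₁ p' η ⊗ₜ[ℂ] star (f₂ η))
      = ∑ η ∈ (hAfin2 p').toFinset, β₁ p' η ⊗ₜ[ℂ] star (f₂ η) := by
    apply finsum_eq_finset_sum_of_support_subset
    intro x hx
    simp only [Function.mem_support, ne_eq] at hx
    simp only [Set.Finite.coe_toFinset, Function.mem_support, ne_eq]
    intro h0
    exact hx (by rw [h0, TensorProduct.zero_tmul])
  rw [ha, hb, hxx, hyy]
  -- commutation of the six pairs of terms
  have cAX : ∀ η μ : ι, Commute (α₁ p η ⊗ₜ[ℂ] α₂ η k) (α₁ p' μ ⊗ₜ[ℂ] f₂ μ) := by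
    intro η μ
    show _ = _
    rw [Algebra.TensorProduct.tmul_mul_tmul, Algebra.TensorProduct.tmul_mul_tmul,
      hA1 p p' η μ, hB5 η μ k]
  have cAY : ∀ η μ : ι, Commute (α₁ p η ⊗ₜ[ℂ] α₂ η k) (β₁ p' μ ⊗ₜ[ℂ] star (f₂ μ)) := by
    intro η μ
    show _ = _
    rw [Algebra.TensorProduct.tmul_mul_tmul, Algebra.TensorProduct.tmul_mul_tmul,
      hA3 p p' η μ, hB6 η μ k, ← TensorProduct.smul_tmul', TensorProduct.tmul_smul,
      smul_smul, inv_mul_cancel₀ (gne η μ), one_smul]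
  have cAZ : ∀ η : ι, Commute (α₁ p η ⊗ₜ[ℂ] α₂ η k) (f₁ p' ⊗ₜ[ℂ] (1 : H₂)) := by
    intro η
    show _ = _
    rw [Algebra.TensorProduct.tmul_mul_tmul, Algebra.TensorProduct.tmul_mul_tmul,
      hA5 p p' η, mul_one, one_mul]
  have cBX : ∀ η μ : ι, Commute (β₁ p η ⊗ₜ[ℂ] star (β₂ η k)) (α₁ p' μ ⊗ₜ[ℂ] f₂ μ) := by
    intro η μ
    show _ = _
    have h13 : β₁ p η * α₁ p' μ = g μ η • (α₁ p' μ * β₁ p η) := by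
      rw [hA3 p' p μ η, smul_smul, mul_inv_cancel₀ (gne μ η), one_smul]
    rw [Algebra.TensorProduct.tmul_mul_tmul, Algebra.TensorProduct.tmul_mul_tmul,
      h13, key η μ k, ← TensorProduct.smul_tmul', TensorProduct.tmul_smul, gsymm μ η]
  have cBY : ∀ η μ : ι, Commute (β₁ p η ⊗ₜ[ℂ] star (β₂ η k)) (β₁ p' μ ⊗ₜ[ℂ] star (f₂ μ)) := by
    intro η μ
    show _ = _
    have h14 : star (β₂ η k) * star (f₂ μ) = star (f₂ μ) * star (β₂ η k) := by
      have h := congrArg star (hB9 η μ k)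
      rw [star_mul, star_mul] at h
      exact h.symm
    rw [Algebra.TensorProduct.tmul_mul_tmul, Algebra.TensorProduct.tmul_mul_tmul,
      hA7 p p' η μ, h14]
  have cBZ : ∀ η : ι, Commute (β₁ p η ⊗ₜ[ℂ] star (β₂ η k)) (f₁ p' ⊗ₜ[ℂ] (1 : H₂)) := by
    intro η
    show _ = _
    rw [Algebra.TensorProduct.tmul_mul_tmul, Algebra.TensorProduct.tmul_mul_tmul,
      hA9 p p' η, mul_one, one_mul]
  have cA : Commute (∑ η ∈ (hAfin1 p).toFinset, α₁ p η ⊗ₜ[ℂ] α₂ η k)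
      ((∑ η ∈ (hAfin1 p').toFinset, α₁ p' η ⊗ₜ[ℂ] f₂ η)
        + (∑ η ∈ (hAfin2 p').toFinset, β₁ p' η ⊗ₜ[ℂ] star (f₂ η)) + f₁ p' ⊗ₜ[ℂ] 1) := by
    refine Commute.add_right (Commute.add_right ?_ ?_) ?_ <;>
      [skip; skip; exact Commute.sum_left _ _ _ fun η _ => cAZ η]
    · exact Commute.sum_left _ _ _ fun η _ =>
        Commute.sum_right _ _ _ fun μ _ => cAX η μ
    · exact Commute.sum_left _ _ _ fun η _ =>
        Commute.sum_right _ _ _ fun μ _ => cAY η μ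
  have cB : Commute (∑ η ∈ (hAfin2 p).toFinset, β₁ p η ⊗ₜ[ℂ] star (β₂ η k))
      ((∑ η ∈ (hAfin1 p').toFinset, α₁ p' η ⊗ₜ[ℂ] f₂ η)
        + (∑ η ∈ (hAfin2 p').toFinset, β₁ p' η ⊗ₜ[ℂ] star (f₂ η)) + f₁ p' ⊗ₜ[ℂ] 1) := by
    refine Commute.add_right (Commute.add_right ?_ ?_) ?_
    · exact Commute.sum_left _ _ _ fun η _ =>
        Commute.sum_right _ _ _ fun μ _ => cBX η μ
    · exact Commute.sum_left _ _ _ fun η _ =>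
        Commute.sum_right _ _ _ fun μ _ => cBY η μ
    · exact Commute.sum_left _ _ _ fun η _ => cBZ η
  exact (cA.add_left cB).eq
end

section
/- The comultiplication preserves the β–f commutation relation: for all p, p', k ∈ ι one has Δβ p k * Δf p' = Δf p' * Δβ p k in H₁ ⊗[ℂ] H₂. -/
open scoped TensorProduct

private lemma star_algMap_comm {H : Type*} [Ring H] [Algebra ℂ H] [StarRing H]
    (c : ℂ) (x : H) : x * star (algebraMap ℂ H c) = star (algebraMap ℂ H c) * x := by
  have h1 : x * star (algebraMap ℂ H c) = star (algebraMap ℂ H c * star x) := by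
    rw [star_mul, star_star]
  rw [h1, Algebra.commutes, star_mul, star_star]

private lemma star_smul_eq {H : Type*} [Ring H] [Algebra ℂ H] [StarRing H]
    (c : ℂ) (x : H) : star (c • x) = star (algebraMap ℂ H c) * star x := by
  rw [Algebra.smul_def, star_mul, star_algMap_comm]

private lemma ringlemma {R : Type*} [Ring R] (a a' b b' f s sinv t : R)
    (h1 : a' = a' * (a * a') - s * (a' * (b' * b)))
    (h2 : f * a' = s * (a' * f))
    (h3 : f * b' = s * (b' * f))
    (h4 : f * a = a * f)
    (h5 : f * b = b * f)
    (h6 : ∀ x : R, x * s = s * x)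
    (h7 : sinv * s = 1)
    (h8 : t * (1 - s) = 1) :
    a' * f = 0 ∧ f * a' = 0 := by
  have sl : ∀ x y : R, x * (s * y) = s * (x * y) := fun x y => by
    rw [← mul_assoc, h6, mul_assoc]
  have c1 : f * (a' * (a * a')) = s * (s * (a' * (a * (a' * f)))) := by
    calc f * (a' * (a * a')) = (f * a') * (a * a') := by rw [mul_assoc]
      _ = (s * (a' * f)) * (a * a') := by rw [h2]
      _ = s * (a' * (f * (a * a'))) := by rw [mul_assoc, mul_assoc]
      _ = s * (a' * ((f * a) * a')) := by rw [mul_assoc]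
      _ = s * (a' * ((a * f) * a')) := by rw [h4]
      _ = s * (a' * (a * (f * a'))) := by rw [mul_assoc]
      _ = s * (a' * (a * (s * (a' * f)))) := by rw [h2]
      _ = s * (a' * (s * (a * (a' * f)))) := by rw [sl]
      _ = s * (s * (a' * (a * (a' * f)))) := by rw [sl a']
  have c2 : f * (s * (a' * (b' * b))) = s * (s * (s * (a' * (b' * (b * f))))) := by
    calc f * (s * (a' * (b' * b))) = s * (f * (a' * (b' * b))) := by rw [sl]
      _ = s * ((f * a') * (b' * b)) := by rw [mul_assoc]
      _ = s * ((s * (a' * f)) * (b' * b)) := by rw [h2]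
      _ = s * (s * (a' * (f * (b' * b)))) := by rw [mul_assoc, mul_assoc]
      _ = s * (s * (a' * ((f * b') * b))) := by rw [mul_assoc]
      _ = s * (s * (a' * ((s * (b' * f)) * b))) := by rw [h3]
      _ = s * (s * (a' * (s * (b' * (f * b))))) := by rw [mul_assoc, mul_assoc]
      _ = s * (s * (a' * (s * (b' * (b * f))))) := by rw [h5]
      _ = s * (s * (s * (a' * (b' * (b * f))))) := by rw [sl a']
  have h1f : a' * f = a' * (a * (a' * f)) - s * (a' * (b' * (b * f))) := by
    have := congrArg (· * f) h1
    simpa only [sub_mul, mul_assoc] using this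
  have key : s * (a' * f) = s * (s * (a' * f)) := by
    calc s * (a' * f) = f * a' := h2.symm
      _ = f * (a' * (a * a') - s * (a' * (b' * b))) := by rw [← h1]
      _ = f * (a' * (a * a')) - f * (s * (a' * (b' * b))) := mul_sub _ _ _
      _ = s * (s * (a' * (a * (a' * f)))) - s * (s * (s * (a' * (b' * (b * f))))) := by
          rw [c1, c2]
      _ = s * (s * (a' * (a * (a' * f)) - s * (a' * (b' * (b * f))))) := by
          rw [← mul_sub, ← mul_sub]
      _ = s * (s * (a' * f)) := by rw [← h1f]
  have e1 : a' * f = s * (a' * f) := by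
    have e0 := congrArg (fun y => sinv * y) key
    have eL : sinv * (s * (a' * f)) = a' * f := by rw [← mul_assoc, h7, one_mul]
    have eR : sinv * (s * (s * (a' * f))) = s * (a' * f) := by rw [← mul_assoc, h7, one_mul]
    exact eL.symm.trans (e0.trans eR)
  have e2 : (1 - s) * (a' * f) = 0 := by rw [sub_mul, one_mul, ← e1, sub_self]
  have e3 : a' * f = 0 := by
    calc a' * f = 1 * (a' * f) := (one_mul _).symm
      _ = (t * (1 - s)) * (a' * f) := by rw [h8]
      _ = t * ((1 - s) * (a' * f)) := mul_assoc _ _ _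
      _ = 0 := by rw [e2, mul_zero]
  exact ⟨e3, by rw [h2, e3, mul_zero]⟩

private lemma rearr {M : Type*} [AddCommGroup M] [Module ℂ M] (q : ℂ) (hq1 : q ≠ 1)
    (x sxa axa txa bba : M)
    (h : x - ((1 - q) • axa + q • sxa) + q • ((1 - q) • bba + q • txa)
        = q • x - q • sxa + q • (q • txa)) :
    x = axa - q • bba := by
  have h1 : ((1 : ℂ) - q) • (x - axa + q • bba)
      = x - ((1 - q) • axa + q • sxa) + q • ((1 - q) • bba + q • txa)
        - (q • x - q • sxa + q • (q • txa)) := by module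
  have h2 : ((1 : ℂ) - q) • (x - axa + q • bba) = 0 := by rw [h1, h, sub_self]
  have h3 : x - axa + q • bba = 0 := by
    have h4 := congrArg (fun y => ((1 : ℂ) - q)⁻¹ • y) h2
    simp only [smul_smul, inv_mul_cancel₀ (sub_ne_zero.mpr (Ne.symm hq1)), one_smul,
      smul_zero] at h4
    exact h4
  have h5 : x - (axa - q • bba) = x - axa + q • bba := by module
  have h6 : x - (axa - q • bba) = 0 := by rw [h5, h3]
  exact sub_eq_zero.mp h6

private lemma main0 {ι : Type*} [DecidableEq ι] (q : ℂ) (hq : q ≠ 0) (hq1 : q ≠ 1)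
    (g : ι → ι → ℂ) (hg : ∀ p p' : ι, g p p' = if p = p' then q else 1)
    {H₂ : Type*} [Ring H₂] [Algebra ℂ H₂] [StarRing H₂]
    (α₂ β₂ : ι → ι → H₂) (f₂ : ι → H₂)
    (hBfin1 : ∀ p, (Function.support (α₂ p)).Finite)
    (hBfin2 : ∀ p, (Function.support (β₂ p)).Finite)
    (hB1 : ∀ p p' k l : ι, α₂ p k * α₂ p' l = α₂ p' l * α₂ p k)
    (hB2 : ∀ p p' k l : ι, α₂ p k * star (α₂ p' l) = (g p p' * (g k l)⁻¹) • (star (α₂ p' l) * α₂ p k))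
    (hB3 : ∀ p p' k l : ι, α₂ p k * β₂ p' l = (g k l)⁻¹ • (β₂ p' l * α₂ p k))
    (hB4 : ∀ p p' k l : ι, α₂ p k * star (β₂ p' l) = g p p' • (star (β₂ p' l) * α₂ p k))
    (hB5 : ∀ p p' k : ι, α₂ p k * f₂ p' = f₂ p' * α₂ p k)
    (hB6 : ∀ p p' k : ι, α₂ p k * star (f₂ p') = g p p' • (star (f₂ p') * α₂ p k))
    (hB9 : ∀ p p' k : ι, β₂ p k * f₂ p' = f₂ p' * β₂ p k)
    (hB10 : ∀ p p' k : ι, β₂ p k * star (f₂ p') = g p p' • (star (f₂ p') * β₂ p k))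
    (hB12 : ∀ p p' : ι, f₂ p * star (f₂ p') - g p p' • (star (f₂ p') * f₂ p)
        = (if p = p' then (1 : ℂ) else 0) • (1 : H₂) - (∑ᶠ k, α₂ p k * star (α₂ p' k))
          + g p p' • ∑ᶠ k, star (β₂ p' k) * β₂ p k)
    (p k : ι) : star (α₂ p k) * f₂ p = 0 ∧ f₂ p * star (α₂ p k) = 0 := by
  classical
  have hgq : ∀ x : ι, g x x = q := fun x => by rw [hg, if_pos rfl]
  -- Finset versions of the two sums
  set E : Finset ι := ((hBfin1 p).toFinset ∪ (hBfin2 p).toFinset) ∪ {k} with hE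
  have hkE : k ∈ E := Finset.mem_union_right _ (Finset.mem_singleton_self k)
  have hSfin : (∑ᶠ j, α₂ p j * star (α₂ p j)) = ∑ j ∈ E, α₂ p j * star (α₂ p j) := by
    refine finsum_eq_finset_sum_of_support_subset _ (fun j hj => ?_)
    have hne : α₂ p j ≠ 0 := fun h0 => hj (by simp [h0])
    exact Finset.mem_coe.mpr (Finset.mem_union_left _
      (Finset.mem_union_left _ ((hBfin1 p).mem_toFinset.mpr hne)))
  have hTfin : (∑ᶠ j, star (β₂ p j) * β₂ p j) = ∑ j ∈ E, star (β₂ p j) * β₂ p j := by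
    refine finsum_eq_finset_sum_of_support_subset _ (fun j hj => ?_)
    have hne : β₂ p j ≠ 0 := fun h0 => hj (by simp [h0])
    exact Finset.mem_coe.mpr (Finset.mem_union_left _
      (Finset.mem_union_right _ ((hBfin2 p).mem_toFinset.mpr hne)))
  have h12 : f₂ p * star (f₂ p) - q • (star (f₂ p) * f₂ p)
      = 1 - (∑ j ∈ E, α₂ p j * star (α₂ p j)) + q • ∑ j ∈ E, star (β₂ p j) * β₂ p j := by
    have h := hB12 p p
    rw [hgq p, if_pos rfl, one_smul, hSfin, hTfin] at h
    exact h
  -- commutation claims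
  have claimS : ∀ j, α₂ p k * (α₂ p j * star (α₂ p j))
      = (q * (g k j)⁻¹) • (α₂ p j * star (α₂ p j) * α₂ p k) := by
    intro j
    calc α₂ p k * (α₂ p j * star (α₂ p j))
        = α₂ p k * α₂ p j * star (α₂ p j) := (mul_assoc _ _ _).symm
      _ = α₂ p j * α₂ p k * star (α₂ p j) := by rw [hB1 p p k j]
      _ = α₂ p j * (α₂ p k * star (α₂ p j)) := mul_assoc _ _ _
      _ = α₂ p j * ((g p p * (g k j)⁻¹) • (star (α₂ p j) * α₂ p k)) := by rw [hB2 p p k j]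
      _ = (g p p * (g k j)⁻¹) • (α₂ p j * (star (α₂ p j) * α₂ p k)) := mul_smul_comm _ _ _
      _ = (q * (g k j)⁻¹) • (α₂ p j * star (α₂ p j) * α₂ p k) := by rw [hgq p, ← mul_assoc]
  have claimT : ∀ j, α₂ p k * (star (β₂ p j) * β₂ p j)
      = (q * (g k j)⁻¹) • (star (β₂ p j) * β₂ p j * α₂ p k) := by
    intro j
    calc α₂ p k * (star (β₂ p j) * β₂ p j)
        = α₂ p k * star (β₂ p j) * β₂ p j := (mul_assoc _ _ _).symm
      _ = (g p p • (star (β₂ p j) * α₂ p k)) * β₂ p j := by rw [hB4 p p k j]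
      _ = g p p • (star (β₂ p j) * α₂ p k * β₂ p j) := smul_mul_assoc _ _ _
      _ = g p p • (star (β₂ p j) * (α₂ p k * β₂ p j)) := by rw [mul_assoc]
      _ = g p p • (star (β₂ p j) * ((g k j)⁻¹ • (β₂ p j * α₂ p k))) := by rw [hB3 p p k j]
      _ = g p p • ((g k j)⁻¹ • (star (β₂ p j) * (β₂ p j * α₂ p k))) := by rw [mul_smul_comm]
      _ = (q * (g k j)⁻¹) • (star (β₂ p j) * β₂ p j * α₂ p k) := by
          rw [smul_smul, hgq p, ← mul_assoc]
  -- eqS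
  have eqS : α₂ p k * (∑ j ∈ E, α₂ p j * star (α₂ p j))
      = ((1 : ℂ) - q) • (α₂ p k * star (α₂ p k) * α₂ p k)
        + q • ((∑ j ∈ E, α₂ p j * star (α₂ p j)) * α₂ p k) := by
    have e3 : α₂ p k * (∑ j ∈ E, α₂ p j * star (α₂ p j))
        - q • ((∑ j ∈ E, α₂ p j * star (α₂ p j)) * α₂ p k)
        = ∑ j ∈ E, ((q * (g k j)⁻¹ - q) • (α₂ p j * star (α₂ p j) * α₂ p k)) := by
      rw [Finset.mul_sum, Finset.sum_mul, Finset.smul_sum, ← Finset.sum_sub_distrib]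
      refine Finset.sum_congr rfl fun j _ => ?_
      rw [claimS j, sub_smul]
    have e4 : ∑ j ∈ E, ((q * (g k j)⁻¹ - q) • (α₂ p j * star (α₂ p j) * α₂ p k))
        = ((1 : ℂ) - q) • (α₂ p k * star (α₂ p k) * α₂ p k) := by
      rw [Finset.sum_eq_single_of_mem k hkE (fun j _ hjk => ?_)]
      · rw [hg, if_pos rfl, mul_inv_cancel₀ hq]
      · rw [hg, if_neg (fun h => hjk h.symm), inv_one, mul_one, sub_self, zero_smul]
    have := e3.trans e4
    exact eq_add_of_sub_eq this
  have eqT : α₂ p k * (∑ j ∈ E, star (β₂ p j) * β₂ p j)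
      = ((1 : ℂ) - q) • (star (β₂ p k) * β₂ p k * α₂ p k)
        + q • ((∑ j ∈ E, star (β₂ p j) * β₂ p j) * α₂ p k) := by
    have e3 : α₂ p k * (∑ j ∈ E, star (β₂ p j) * β₂ p j)
        - q • ((∑ j ∈ E, star (β₂ p j) * β₂ p j) * α₂ p k)
        = ∑ j ∈ E, ((q * (g k j)⁻¹ - q) • (star (β₂ p j) * β₂ p j * α₂ p k)) := by
      rw [Finset.mul_sum, Finset.sum_mul, Finset.smul_sum, ← Finset.sum_sub_distrib]
      refine Finset.sum_congr rfl fun j _ => ?_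
      rw [claimT j, sub_smul]
    have e4 : ∑ j ∈ E, ((q * (g k j)⁻¹ - q) • (star (β₂ p j) * β₂ p j * α₂ p k))
        = ((1 : ℂ) - q) • (star (β₂ p k) * β₂ p k * α₂ p k) := by
      rw [Finset.sum_eq_single_of_mem k hkE (fun j _ hjk => ?_)]
      · rw [hg, if_pos rfl, mul_inv_cancel₀ hq]
      · rw [hg, if_neg (fun h => hjk h.symm), inv_one, mul_one, sub_self, zero_smul]
    have := e3.trans e4
    exact eq_add_of_sub_eq this
  -- m1
  have hAF : α₂ p k * f₂ p = f₂ p * α₂ p k := hB5 p p k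
  have hAF' : α₂ p k * star (f₂ p) = q • (star (f₂ p) * α₂ p k) := by
    have h := hB6 p p k; rwa [hgq p] at h
  have mA : α₂ p k * (f₂ p * star (f₂ p)) = q • (f₂ p * star (f₂ p) * α₂ p k) := by
    calc α₂ p k * (f₂ p * star (f₂ p))
        = α₂ p k * f₂ p * star (f₂ p) := (mul_assoc _ _ _).symm
      _ = f₂ p * α₂ p k * star (f₂ p) := by rw [hAF]
      _ = f₂ p * (α₂ p k * star (f₂ p)) := mul_assoc _ _ _
      _ = f₂ p * (q • (star (f₂ p) * α₂ p k)) := by rw [hAF']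
      _ = q • (f₂ p * (star (f₂ p) * α₂ p k)) := mul_smul_comm _ _ _
      _ = q • (f₂ p * star (f₂ p) * α₂ p k) := by rw [← mul_assoc]
  have mB : α₂ p k * (star (f₂ p) * f₂ p) = q • (star (f₂ p) * f₂ p * α₂ p k) := by
    calc α₂ p k * (star (f₂ p) * f₂ p)
        = α₂ p k * star (f₂ p) * f₂ p := (mul_assoc _ _ _).symm
      _ = (q • (star (f₂ p) * α₂ p k)) * f₂ p := by rw [hAF']
      _ = q • (star (f₂ p) * α₂ p k * f₂ p) := smul_mul_assoc _ _ _
      _ = q • (star (f₂ p) * (α₂ p k * f₂ p)) := by rw [mul_assoc]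
      _ = q • (star (f₂ p) * (f₂ p * α₂ p k)) := by rw [hAF]
      _ = q • (star (f₂ p) * f₂ p * α₂ p k) := by rw [← mul_assoc]
  have m1 : α₂ p k * (f₂ p * star (f₂ p) - q • (star (f₂ p) * f₂ p))
      = q • ((f₂ p * star (f₂ p) - q • (star (f₂ p) * f₂ p)) * α₂ p k) := by
    rw [mul_sub, mul_smul_comm, mA, mB, sub_mul, smul_mul_assoc, smul_sub]
  have m2 : α₂ p k * (1 - (∑ j ∈ E, α₂ p j * star (α₂ p j))
        + q • ∑ j ∈ E, star (β₂ p j) * β₂ p j)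
      = q • ((1 - (∑ j ∈ E, α₂ p j * star (α₂ p j))
        + q • ∑ j ∈ E, star (β₂ p j) * β₂ p j) * α₂ p k) := by
    rw [← h12]; exact m1
  have m2L : α₂ p k * (1 - (∑ j ∈ E, α₂ p j * star (α₂ p j))
        + q • ∑ j ∈ E, star (β₂ p j) * β₂ p j)
      = α₂ p k - (((1 : ℂ) - q) • (α₂ p k * star (α₂ p k) * α₂ p k)
          + q • ((∑ j ∈ E, α₂ p j * star (α₂ p j)) * α₂ p k))
        + q • (((1 : ℂ) - q) • (star (β₂ p k) * β₂ p k * α₂ p k)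
          + q • ((∑ j ∈ E, star (β₂ p j) * β₂ p j) * α₂ p k)) := by
    rw [mul_add, mul_sub, mul_one, mul_smul_comm, eqS, eqT]
  have m2R : q • ((1 - (∑ j ∈ E, α₂ p j * star (α₂ p j))
        + q • ∑ j ∈ E, star (β₂ p j) * β₂ p j) * α₂ p k)
      = q • α₂ p k - q • ((∑ j ∈ E, α₂ p j * star (α₂ p j)) * α₂ p k)
        + q • (q • ((∑ j ∈ E, star (β₂ p j) * β₂ p j) * α₂ p k)) := by
    rw [add_mul, sub_mul, one_mul, smul_mul_assoc, smul_add, smul_sub]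
  have hyp := m2L.symm.trans (m2.trans m2R)
  have hG3 : α₂ p k = α₂ p k * star (α₂ p k) * α₂ p k
      - q • (star (β₂ p k) * β₂ p k * α₂ p k) :=
    rearr q hq1 _ _ _ _ _ hyp
  -- star it
  have hG3s : star (α₂ p k) = star (α₂ p k) * (α₂ p k * star (α₂ p k))
      - star (algebraMap ℂ H₂ q) * (star (α₂ p k) * (star (β₂ p k) * β₂ p k)) := by
    have h := congrArg star hG3
    rw [star_sub, star_smul_eq] at h
    simpa only [star_mul, star_star, mul_assoc] using h
  have h2 : f₂ p * star (α₂ p k) = star (algebraMap ℂ H₂ q) * (star (α₂ p k) * f₂ p) := by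
    have h := congrArg star hAF'
    rw [star_smul_eq] at h
    simpa only [star_mul, star_star, mul_assoc] using h
  have h3 : f₂ p * star (β₂ p k) = star (algebraMap ℂ H₂ q) * (star (β₂ p k) * f₂ p) := by
    have hBF' : β₂ p k * star (f₂ p) = q • (star (f₂ p) * β₂ p k) := by
      have h := hB10 p p k; rwa [hgq p] at h
    have h := congrArg star hBF'
    rw [star_smul_eq] at h
    simpa only [star_mul, star_star, mul_assoc] using h
  have h7 : star (algebraMap ℂ H₂ q⁻¹) * star (algebraMap ℂ H₂ q) = 1 := by
    rw [← star_mul, ← map_mul, mul_inv_cancel₀ hq, map_one, star_one]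
  have h8 : star (algebraMap ℂ H₂ (1 - q)⁻¹) * (1 - star (algebraMap ℂ H₂ q)) = 1 := by
    have hone : (1 : H₂) - star (algebraMap ℂ H₂ q) = star (algebraMap ℂ H₂ (1 - q)) := by
      rw [map_sub, map_one, star_sub, star_one]
    rw [hone, ← star_mul, ← map_mul, mul_inv_cancel₀ (sub_ne_zero.mpr (Ne.symm hq1)),
      map_one, star_one]
  exact ringlemma (α₂ p k) (star (α₂ p k)) (β₂ p k) (star (β₂ p k)) (f₂ p)
    (star (algebraMap ℂ H₂ q)) (star (algebraMap ℂ H₂ q⁻¹))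
    (star (algebraMap ℂ H₂ (1 - q)⁻¹)) hG3s h2 h3 (hB5 p p k).symm (hB9 p p k).symm
    (fun x => star_algMap_comm q x) h7 h8

private lemma key2 {ι : Type*} [DecidableEq ι] (q : ℂ) (hq : q ≠ 0)
    (g : ι → ι → ℂ) (hg : ∀ p p' : ι, g p p' = if p = p' then q else 1)
    {H₂ : Type*} [Ring H₂] [Algebra ℂ H₂] [StarRing H₂]
    (α₂ β₂ : ι → ι → H₂) (f₂ : ι → H₂)
    (hBfin1 : ∀ p, (Function.support (α₂ p)).Finite)
    (hBfin2 : ∀ p, (Function.support (β₂ p)).Finite)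
    (hB1 : ∀ p p' k l : ι, α₂ p k * α₂ p' l = α₂ p' l * α₂ p k)
    (hB2 : ∀ p p' k l : ι, α₂ p k * star (α₂ p' l) = (g p p' * (g k l)⁻¹) • (star (α₂ p' l) * α₂ p k))
    (hB3 : ∀ p p' k l : ι, α₂ p k * β₂ p' l = (g k l)⁻¹ • (β₂ p' l * α₂ p k))
    (hB4 : ∀ p p' k l : ι, α₂ p k * star (β₂ p' l) = g p p' • (star (β₂ p' l) * α₂ p k))
    (hB5 : ∀ p p' k : ι, α₂ p k * f₂ p' = f₂ p' * α₂ p k)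
    (hB6 : ∀ p p' k : ι, α₂ p k * star (f₂ p') = g p p' • (star (f₂ p') * α₂ p k))
    (hB9 : ∀ p p' k : ι, β₂ p k * f₂ p' = f₂ p' * β₂ p k)
    (hB10 : ∀ p p' k : ι, β₂ p k * star (f₂ p') = g p p' • (star (f₂ p') * β₂ p k))
    (hB12 : ∀ p p' : ι, f₂ p * star (f₂ p') - g p p' • (star (f₂ p') * f₂ p)
        = (if p = p' then (1 : ℂ) else 0) • (1 : H₂) - (∑ᶠ k, α₂ p k * star (α₂ p' k))
          + g p p' • ∑ᶠ k, star (β₂ p' k) * β₂ p k) :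
    ∀ η μ k : ι, g η μ • (star (α₂ η k) * f₂ μ) = f₂ μ * star (α₂ η k) := by
  intro η μ k
  by_cases hem : η = μ
  · subst hem
    rw [hg, if_pos rfl]
    by_cases hq1 : q = 1
    · subst hq1
      rw [one_smul]
      have h6 := hB6 η η k
      rw [hg, if_pos rfl, one_smul] at h6
      have h7 := congrArg star h6
      simp only [star_mul, star_star] at h7
      exact h7.symm
    · obtain ⟨h0, h0'⟩ := main0 q hq hq1 g hg α₂ β₂ f₂ hBfin1 hBfin2
        hB1 hB2 hB3 hB4 hB5 hB6 hB9 hB10 hB12 η k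
      rw [h0, h0', smul_zero]
  · rw [hg, if_neg hem, one_smul]
    have h6 := hB6 η μ k
    rw [hg, if_neg hem, one_smul] at h6
    have h7 := congrArg star h6
    simp only [star_mul, star_star] at h7
    exact h7.symm

theorem stmt_11
    {ι : Type*} [DecidableEq ι] (q : ℂ) (hq : q ≠ 0)
    (g : ι → ι → ℂ) (hg : ∀ p p' : ι, g p p' = if p = p' then q else 1)
    {H₁ : Type*} [Ring H₁] [Algebra ℂ H₁] [StarRing H₁]
    (α₁ β₁ : ι → ι → H₁) (f₁ : ι → H₁)
    (hAfin1 : ∀ p, (Function.support (α₁ p)).Finite)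
    (hAfin2 : ∀ p, (Function.support (β₁ p)).Finite)
    (hA1 : ∀ p p' k l : ι, α₁ p k * α₁ p' l = α₁ p' l * α₁ p k)
    (hA2 : ∀ p p' k l : ι, α₁ p k * star (α₁ p' l) = (g p p' * (g k l)⁻¹) • (star (α₁ p' l) * α₁ p k))
    (hA3 : ∀ p p' k l : ι, α₁ p k * β₁ p' l = (g k l)⁻¹ • (β₁ p' l * α₁ p k))
    (hA4 : ∀ p p' k l : ι, α₁ p k * star (β₁ p' l) = g p p' • (star (β₁ p' l) * α₁ p k))
    (hA5 : ∀ p p' k : ι, α₁ p k * f₁ p' = f₁ p' * α₁ p k)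
    (hA6 : ∀ p p' k : ι, α₁ p k * star (f₁ p') = g p p' • (star (f₁ p') * α₁ p k))
    (hA7 : ∀ p p' k l : ι, β₁ p k * β₁ p' l = β₁ p' l * β₁ p k)
    (hA8 : ∀ p p' k l : ι, β₁ p k * star (β₁ p' l) = (g p p' * g k l) • (star (β₁ p' l) * β₁ p k))
    (hA9 : ∀ p p' k : ι, β₁ p k * f₁ p' = f₁ p' * β₁ p k)
    (hA10 : ∀ p p' k : ι, β₁ p k * star (f₁ p') = g p p' • (star (f₁ p') * β₁ p k))
    (hA11 : ∀ p p' : ι, f₁ p * f₁ p' - f₁ p' * f₁ p = ∑ᶠ k, (α₁ p k * β₁ p' k - α₁ p' k * β₁ p k))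
    (hA12 : ∀ p p' : ι, f₁ p * star (f₁ p') - g p p' • (star (f₁ p') * f₁ p)
        = (if p = p' then (1 : ℂ) else 0) • (1 : H₁) - (∑ᶠ k, α₁ p k * star (α₁ p' k))
          + g p p' • ∑ᶠ k, star (β₁ p' k) * β₁ p k)
    {H₂ : Type*} [Ring H₂] [Algebra ℂ H₂] [StarRing H₂]
    (α₂ β₂ : ι → ι → H₂) (f₂ : ι → H₂)
    (hBfin1 : ∀ p, (Function.support (α₂ p)).Finite)
    (hBfin2 : ∀ p, (Function.support (β₂ p)).Finite)
    (hB1 : ∀ p p' k l : ι, α₂ p k * α₂ p' l = α₂ p' l * α₂ p k)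
    (hB2 : ∀ p p' k l : ι, α₂ p k * star (α₂ p' l) = (g p p' * (g k l)⁻¹) • (star (α₂ p' l) * α₂ p k))
    (hB3 : ∀ p p' k l : ι, α₂ p k * β₂ p' l = (g k l)⁻¹ • (β₂ p' l * α₂ p k))
    (hB4 : ∀ p p' k l : ι, α₂ p k * star (β₂ p' l) = g p p' • (star (β₂ p' l) * α₂ p k))
    (hB5 : ∀ p p' k : ι, α₂ p k * f₂ p' = f₂ p' * α₂ p k)
    (hB6 : ∀ p p' k : ι, α₂ p k * star (f₂ p') = g p p' • (star (f₂ p') * α₂ p k))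
    (hB7 : ∀ p p' k l : ι, β₂ p k * β₂ p' l = β₂ p' l * β₂ p k)
    (hB8 : ∀ p p' k l : ι, β₂ p k * star (β₂ p' l) = (g p p' * g k l) • (star (β₂ p' l) * β₂ p k))
    (hB9 : ∀ p p' k : ι, β₂ p k * f₂ p' = f₂ p' * β₂ p k)
    (hB10 : ∀ p p' k : ι, β₂ p k * star (f₂ p') = g p p' • (star (f₂ p') * β₂ p k))
    (hB11 : ∀ p p' : ι, f₂ p * f₂ p' - f₂ p' * f₂ p = ∑ᶠ k, (α₂ p k * β₂ p' k - α₂ p' k * β₂ p k))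
    (hB12 : ∀ p p' : ι, f₂ p * star (f₂ p') - g p p' • (star (f₂ p') * f₂ p)
        = (if p = p' then (1 : ℂ) else 0) • (1 : H₂) - (∑ᶠ k, α₂ p k * star (α₂ p' k))
          + g p p' • ∑ᶠ k, star (β₂ p' k) * β₂ p k)
    (Dα Dβ Dαs Dβs : ι → ι → H₁ ⊗[ℂ] H₂) (Df Dfs : ι → H₁ ⊗[ℂ] H₂)
    (hDα : ∀ p k : ι, Dα p k = (∑ᶠ η, α₁ p η ⊗ₜ[ℂ] α₂ η k) + ∑ᶠ η, β₁ p η ⊗ₜ[ℂ] star (β₂ η k))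
    (hDβ : ∀ p k : ι, Dβ p k = (∑ᶠ η, α₁ p η ⊗ₜ[ℂ] β₂ η k) + ∑ᶠ η, β₁ p η ⊗ₜ[ℂ] star (α₂ η k))
    (hDf : ∀ p : ι, Df p = (∑ᶠ η, α₁ p η ⊗ₜ[ℂ] f₂ η) + (∑ᶠ η, β₁ p η ⊗ₜ[ℂ] star (f₂ η)) + f₁ p ⊗ₜ[ℂ] 1)
    (hDαs : ∀ p k : ι, Dαs p k = (∑ᶠ η, star (α₁ p η) ⊗ₜ[ℂ] star (α₂ η k)) + ∑ᶠ η, star (β₁ p η) ⊗ₜ[ℂ] β₂ η k)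
    (hDβs : ∀ p k : ι, Dβs p k = (∑ᶠ η, star (α₁ p η) ⊗ₜ[ℂ] star (β₂ η k)) + ∑ᶠ η, star (β₁ p η) ⊗ₜ[ℂ] α₂ η k)
    (hDfs : ∀ p : ι, Dfs p
        = (∑ᶠ η, star (α₁ p η) ⊗ₜ[ℂ] star (f₂ η)) + (∑ᶠ η, star (β₁ p η) ⊗ₜ[ℂ] f₂ η) + star (f₁ p) ⊗ₜ[ℂ] 1) :
    ∀ p p' k : ι, Dβ p k * Df p' = Df p' * Dβ p k := by
  intro p p' k
  classical
  have gne : ∀ x y : ι, g x y ≠ 0 := fun x y => by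
    rw [hg]; split_ifs; exacts [hq, one_ne_zero]
  have gsym : ∀ x y : ι, g x y = g y x := fun x y => by
    by_cases h : x = y
    · rw [h]
    · rw [hg, hg, if_neg h, if_neg (fun hh => h hh.symm)]
  have hkey := key2 q hq g hg α₂ β₂ f₂ hBfin1 hBfin2 hB1 hB2 hB3 hB4 hB5 hB6 hB9 hB10 hB12
  set W : Finset ι := (((hAfin1 p).toFinset ∪ (hAfin2 p).toFinset)
      ∪ ((hAfin1 p').toFinset ∪ (hAfin2 p').toFinset)) with hW
  -- membership helpers
  have mem1 : ∀ η, α₁ p η ≠ 0 → η ∈ W := fun η h => Finset.mem_union_left _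
    (Finset.mem_union_left _ ((hAfin1 p).mem_toFinset.mpr h))
  have mem2 : ∀ η, β₁ p η ≠ 0 → η ∈ W := fun η h => Finset.mem_union_left _
    (Finset.mem_union_right _ ((hAfin2 p).mem_toFinset.mpr h))
  have mem3 : ∀ η, α₁ p' η ≠ 0 → η ∈ W := fun η h => Finset.mem_union_right _
    (Finset.mem_union_left _ ((hAfin1 p').mem_toFinset.mpr h))
  have mem4 : ∀ η, β₁ p' η ≠ 0 → η ∈ W := fun η h => Finset.mem_union_right _
    (Finset.mem_union_right _ ((hAfin2 p').mem_toFinset.mpr h))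
  have repβ : Dβ p k = ∑ η ∈ W, (α₁ p η ⊗ₜ[ℂ] β₂ η k + β₁ p η ⊗ₜ[ℂ] star (α₂ η k)) := by
    rw [hDβ p k,
      finsum_eq_finset_sum_of_support_subset (fun η => α₁ p η ⊗ₜ[ℂ] β₂ η k) (s := W)
        (fun η hη => Finset.mem_coe.mpr (mem1 η (fun h0 => hη (by simp [h0])))),
      finsum_eq_finset_sum_of_support_subset (fun η => β₁ p η ⊗ₜ[ℂ] star (α₂ η k)) (s := W)
        (fun η hη => Finset.mem_coe.mpr (mem2 η (fun h0 => hη (by simp [h0])))),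
      ← Finset.sum_add_distrib]
  have repf : Df p' = (∑ μ ∈ W, (α₁ p' μ ⊗ₜ[ℂ] f₂ μ + β₁ p' μ ⊗ₜ[ℂ] star (f₂ μ)))
      + f₁ p' ⊗ₜ[ℂ] 1 := by
    rw [hDf p',
      finsum_eq_finset_sum_of_support_subset (fun μ => α₁ p' μ ⊗ₜ[ℂ] f₂ μ) (s := W)
        (fun μ hμ => Finset.mem_coe.mpr (mem3 μ (fun h0 => hμ (by simp [h0])))),
      finsum_eq_finset_sum_of_support_subset (fun μ => β₁ p' μ ⊗ₜ[ℂ] star (f₂ μ)) (s := W)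
        (fun μ hμ => Finset.mem_coe.mpr (mem4 μ (fun h0 => hμ (by simp [h0])))),
      ← Finset.sum_add_distrib]
  -- pairwise commutation
  have c11 : ∀ η μ : ι, (α₁ p η ⊗ₜ[ℂ] β₂ η k) * (α₁ p' μ ⊗ₜ[ℂ] f₂ μ)
      = (α₁ p' μ ⊗ₜ[ℂ] f₂ μ) * (α₁ p η ⊗ₜ[ℂ] β₂ η k) := by
    intro η μ
    rw [Algebra.TensorProduct.tmul_mul_tmul, Algebra.TensorProduct.tmul_mul_tmul,
      hA1 p p' η μ, hB9 η μ k]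
  have c21 : ∀ η μ : ι, (β₁ p η ⊗ₜ[ℂ] star (α₂ η k)) * (α₁ p' μ ⊗ₜ[ℂ] f₂ μ)
      = (α₁ p' μ ⊗ₜ[ℂ] f₂ μ) * (β₁ p η ⊗ₜ[ℂ] star (α₂ η k)) := by
    intro η μ
    have hL : β₁ p η * α₁ p' μ = g μ η • (α₁ p' μ * β₁ p η) := by
      rw [hA3 p' p μ η, smul_smul, mul_inv_cancel₀ (gne μ η), one_smul]
    have hR : f₂ μ * star (α₂ η k) = g η μ • (star (α₂ η k) * f₂ μ) := (hkey η μ k).symm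
    rw [Algebra.TensorProduct.tmul_mul_tmul, Algebra.TensorProduct.tmul_mul_tmul,
      hL, hR, ← TensorProduct.smul_tmul', TensorProduct.tmul_smul, gsym μ η]
  have c12 : ∀ η μ : ι, (α₁ p η ⊗ₜ[ℂ] β₂ η k) * (β₁ p' μ ⊗ₜ[ℂ] star (f₂ μ))
      = (β₁ p' μ ⊗ₜ[ℂ] star (f₂ μ)) * (α₁ p η ⊗ₜ[ℂ] β₂ η k) := by
    intro η μ
    rw [Algebra.TensorProduct.tmul_mul_tmul, Algebra.TensorProduct.tmul_mul_tmul,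
      hA3 p p' η μ, hB10 η μ k, ← TensorProduct.smul_tmul', TensorProduct.tmul_smul,
      smul_smul, inv_mul_cancel₀ (gne η μ), one_smul]
  have c22 : ∀ η μ : ι, (β₁ p η ⊗ₜ[ℂ] star (α₂ η k)) * (β₁ p' μ ⊗ₜ[ℂ] star (f₂ μ))
      = (β₁ p' μ ⊗ₜ[ℂ] star (f₂ μ)) * (β₁ p η ⊗ₜ[ℂ] star (α₂ η k)) := by
    intro η μ
    have hst : star (α₂ η k) * star (f₂ μ) = star (f₂ μ) * star (α₂ η k) := by
      have h := congrArg star (hB5 η μ k)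
      simp only [star_mul] at h
      exact h.symm
    rw [Algebra.TensorProduct.tmul_mul_tmul, Algebra.TensorProduct.tmul_mul_tmul,
      hA7 p p' η μ, hst]
  have cz1 : ∀ η : ι, (α₁ p η ⊗ₜ[ℂ] β₂ η k) * (f₁ p' ⊗ₜ[ℂ] 1)
      = (f₁ p' ⊗ₜ[ℂ] 1) * (α₁ p η ⊗ₜ[ℂ] β₂ η k) := by
    intro η
    rw [Algebra.TensorProduct.tmul_mul_tmul, Algebra.TensorProduct.tmul_mul_tmul,
      hA5 p p' η, mul_one, one_mul]
  have cz2 : ∀ η : ι, (β₁ p η ⊗ₜ[ℂ] star (α₂ η k)) * (f₁ p' ⊗ₜ[ℂ] 1)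
      = (f₁ p' ⊗ₜ[ℂ] 1) * (β₁ p η ⊗ₜ[ℂ] star (α₂ η k)) := by
    intro η
    rw [Algebra.TensorProduct.tmul_mul_tmul, Algebra.TensorProduct.tmul_mul_tmul,
      hA9 p p' η, mul_one, one_mul]
  rw [repβ, repf]
  refine (Commute.add_right ?_ ?_).eq
  · refine Commute.sum_left _ _ _ (fun η _ => ?_)
    refine Commute.sum_right _ _ _ (fun μ _ => ?_)
    exact Commute.add_right
      (Commute.add_left (c11 η μ) (c21 η μ))
      (Commute.add_left (c12 η μ) (c22 η μ))
  · refine Commute.sum_left _ _ _ (fun η _ => ?_)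
    exact Commute.add_left (cz1 η) (cz2 η)
end
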